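/- arXiv:2410.20449 — 14 statements merged into one kernel-verified Lean document; each statement's English description precedes it below -/
import Mathlib

section
/- Every perimetric contraction on k-polygons is a mapping contracting total pairwise distances on k points with the same contraction coefficient. That is, if T: X → X satisfies P(Tx₁,...,Txₖ) ≤ λ P(x₁,...,xₖ) for all k pairwise distinct points, then S(Tx₁,...,Txₖ) ≤ λ S(x₁,...,xₖ) for all k pairwise distinct points. -/
noncomputable def perim {X : Type*} [MetricSpace X] {k : ℕ} [NeZero k] (x : Fin k → X) : ℝ :=
  ∑ i : Fin k, dist (x i) (x (i + 1))

noncomputable def totalDist {X : Type*} [MetricSpace X] {k : ℕ} (x : Fin k → X) : ℝ :=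
  ∑ i : Fin k, ∑ j : Fin k, if i < j then dist (x i) (x j) else 0

section Aux

variable {k : ℕ} [NeZero k]

lemma fin_zero_ne_one' (hk : 3 ≤ k) : (0 : Fin k) ≠ 1 := by
  have h1 : ((1 : Fin k) : ℕ) = 1 := by
    rw [Fin.val_one']; exact Nat.mod_eq_of_lt (by omega)
  intro h
  have := congrArg Fin.val h
  rw [Fin.val_zero, h1] at this
  exact one_ne_zero this.symm

/-- a permutation sending 0 ↦ a and 1 ↦ b -/
def pi2 (a b : Fin k) : Equiv.Perm (Fin k) :=
  Equiv.swap 0 a * Equiv.swap 1 (Equiv.swap 0 a b)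

lemma pi2_zero (hk : 3 ≤ k) (a b : Fin k) (hab : a ≠ b) : pi2 a b 0 = a := by
  have h01 : (0 : Fin k) ≠ 1 := fin_zero_ne_one' hk
  have hb' : (0 : Fin k) ≠ Equiv.swap 0 a b := by
    intro h
    have := congrArg (Equiv.swap 0 a) h
    simp [Equiv.swap_apply_left] at this
    exact hab this
  simp [pi2, Equiv.Perm.mul_apply, Equiv.swap_apply_of_ne_of_ne h01 hb']

lemma pi2_one (a b : Fin k) : pi2 a b 1 = b := by
  simp [pi2, Equiv.Perm.mul_apply]

lemma exists_rho (hk : 3 ≤ k) {a b a' b' : Fin k} (hab : a ≠ b) (hab' : a' ≠ b') :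
    ∃ ρ : Equiv.Perm (Fin k), ρ a = a' ∧ ρ b = b' := by
  refine ⟨pi2 a' b' * (pi2 a b)⁻¹, ?_, ?_⟩
  · have h : (pi2 a b)⁻¹ a = 0 := by
      apply Equiv.injective (pi2 a b)
      simp [pi2_zero hk a b hab]
    simp [Equiv.Perm.mul_apply, h, pi2_zero hk a' b' hab']
  · have h : (pi2 a b)⁻¹ b = 1 := by
      apply Equiv.injective (pi2 a b)
      simp [pi2_one]
    simp [Equiv.Perm.mul_apply, h, pi2_one]

/-- the fiber of permutations sending (0,1) to p -/
def fib (p : Fin k × Fin k) : Finset (Equiv.Perm (Fin k)) :=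
  Finset.univ.filter (fun σ => (σ 0, σ 1) = p)

lemma mem_fib {p : Fin k × Fin k} {σ : Equiv.Perm (Fin k)} :
    σ ∈ fib p ↔ σ 0 = p.1 ∧ σ 1 = p.2 := by
  simp [fib, Prod.ext_iff]

lemma fib_card_eq (hk : 3 ≤ k) {a b a' b' : Fin k} (hab : a ≠ b) (hab' : a' ≠ b') :
    (fib ((a : Fin k), b)).card = (fib ((a' : Fin k), b')).card := by
  obtain ⟨ρ, h1, h2⟩ := exists_rho hk hab hab'
  refine Finset.card_bij' (fun σ _ => ρ * σ) (fun σ _ => ρ⁻¹ * σ) ?_ ?_ ?_ ?_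
  · intro σ hσ
    rw [mem_fib] at hσ ⊢
    simp [Equiv.Perm.mul_apply, hσ.1, hσ.2, h1, h2]
  · intro σ hσ
    rw [mem_fib] at hσ ⊢
    constructor
    · simp [Equiv.Perm.mul_apply, hσ.1, ← h1]
    · simp [Equiv.Perm.mul_apply, hσ.2, ← h2]
  · intro σ _; simp [mul_assoc, ← Equiv.Perm.mul_def]
  · intro σ _; simp [mul_assoc, ← Equiv.Perm.mul_def]

lemma fib_card_pos (hk : 3 ≤ k) : 0 < (fib (((0 : Fin k)), (1 : Fin k))).card := by
  refine Finset.card_pos.2 ⟨pi2 0 1, ?_⟩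
  rw [mem_fib]
  exact ⟨pi2_zero hk 0 1 (fin_zero_ne_one' hk), pi2_one 0 1⟩

variable {X : Type*} [MetricSpace X]

lemma two_total (y : Fin k → X) :
    ∑ a : Fin k, ∑ b : Fin k, (if a ≠ b then dist (y a) (y b) else 0)
      = 2 * totalDist y := by
  have key : ∀ a b : Fin k, (if a ≠ b then dist (y a) (y b) else 0)
      = (if a < b then dist (y a) (y b) else 0) + (if b < a then dist (y b) (y a) else 0) := by
    intro a b
    rcases lt_trichotomy a b with h | h | h
    · simp [h, h.ne, not_lt.2 h.le, dist_comm]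
    · simp [h]
    · simp [h, h.ne', not_lt.2 h.le, dist_comm]
  calc ∑ a : Fin k, ∑ b : Fin k, (if a ≠ b then dist (y a) (y b) else 0)
      = ∑ a : Fin k, ∑ b : Fin k, ((if a < b then dist (y a) (y b) else 0)
          + (if b < a then dist (y b) (y a) else 0)) := by
        exact Finset.sum_congr rfl fun a _ => Finset.sum_congr rfl fun b _ => key a b
    _ = totalDist y + ∑ a : Fin k, ∑ b : Fin k, (if b < a then dist (y b) (y a) else 0) := by
        simp [Finset.sum_add_distrib, totalDist]
    _ = totalDist y + totalDist y := by
        rw [Finset.sum_comm (f := fun a b => if b < a then dist (y b) (y a) else 0)]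
        rfl
    _ = 2 * totalDist y := by ring

lemma sum_perm_pair (hk : 3 ≤ k) (y : Fin k → X) :
    ∑ σ : Equiv.Perm (Fin k), dist (y (σ 0)) (y (σ 1))
      = ((fib (((0 : Fin k)), (1 : Fin k))).card : ℝ) * (2 * totalDist y) := by
  classical
  rw [← two_total y]
  have := Finset.sum_fiberwise' (Finset.univ : Finset (Equiv.Perm (Fin k)))
    (fun σ => ((σ 0 : Fin k), σ 1)) (fun p : Fin k × Fin k => dist (y p.1) (y p.2))
  rw [← this]
  rw [Finset.mul_sum, Fintype.sum_prod_type]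
  refine Finset.sum_congr rfl fun a _ => ?_
  rw [Finset.mul_sum]
  refine Finset.sum_congr rfl fun b _ => ?_
  have hfib : (Finset.univ.filter fun σ : Equiv.Perm (Fin k) => (σ 0, σ 1) = (a, b)) = fib (a, b) := rfl
  rw [hfib, Finset.sum_const, nsmul_eq_mul]
  by_cases hab : a = b
  · subst hab; simp
  · rw [if_pos hab, fib_card_eq hk (fin_zero_ne_one' hk) hab]

lemma sum_perm_perim (hk : 3 ≤ k) (y : Fin k → X) :
    ∑ σ : Equiv.Perm (Fin k), perim (y ∘ σ)
      = (k : ℝ) * ((fib (((0 : Fin k)), (1 : Fin k))).card : ℝ) * (2 * totalDist y) := by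
  classical
  have step1 : ∑ σ : Equiv.Perm (Fin k), perim (y ∘ σ)
      = ∑ i : Fin k, ∑ σ : Equiv.Perm (Fin k), dist (y (σ i)) (y (σ (i + 1))) := by
    rw [Finset.sum_comm]
    rfl
  have step2 : ∀ i : Fin k, ∑ σ : Equiv.Perm (Fin k), dist (y (σ i)) (y (σ (i + 1)))
      = ∑ σ : Equiv.Perm (Fin k), dist (y (σ 0)) (y (σ 1)) := by
    intro i
    have := Equiv.sum_comp (Equiv.mulRight ((Equiv.addRight i : Equiv.Perm (Fin k))))
      (fun σ : Equiv.Perm (Fin k) => dist (y (σ 0)) (y (σ 1)))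
    rw [← this]
    refine Finset.sum_congr rfl fun σ _ => ?_
    simp [Equiv.Perm.mul_apply, Equiv.mulRight, add_comm]
  rw [step1]
  simp only [step2]
  rw [Finset.sum_const, Finset.card_univ, Fintype.card_fin, nsmul_eq_mul,
    sum_perm_pair hk y, mul_assoc]

end Aux

theorem stmt0 {X : Type*} [MetricSpace X] {k : ℕ} [NeZero k] (hk : 3 ≤ k)
    (hX : ∃ f : Fin k → X, Function.Injective f)
    (T : X → X) (lam : ℝ) (hlam0 : 0 ≤ lam) (hlam1 : lam < 1)
    (hT : ∀ x : Fin k → X, Function.Injective x → perim (T ∘ x) ≤ lam * perim x) :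
    ∀ x : Fin k → X, Function.Injective x → totalDist (T ∘ x) ≤ lam * totalDist x := by
  classical
  intro x hx
  set c : ℝ := (k : ℝ) * ((fib (((0 : Fin k)), (1 : Fin k))).card : ℝ) with hc
  have hcpos : 0 < c := by
    apply mul_pos
    · exact_mod_cast Nat.pos_of_ne_zero (NeZero.ne k)
    · exact_mod_cast fib_card_pos (k := k) hk
  have key : c * (2 * totalDist (T ∘ x)) ≤ lam * (c * (2 * totalDist x)) := by
    rw [← sum_perm_perim hk (T ∘ x), ← sum_perm_perim hk x, Finset.mul_sum]
    refine Finset.sum_le_sum fun σ _ => ?_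
    have h1 : (T ∘ x) ∘ σ = T ∘ (x ∘ σ) := rfl
    rw [h1]
    exact hT (x ∘ σ) (hx.comp σ.injective)
  nlinarith [key, hcpos]
end

section
/- Every perimetric contraction T on k-polygons is continuous. -/
open Topology

theorem stmt2 {X : Type*} [MetricSpace X] {k : ℕ} [NeZero k] (hk : 3 ≤ k)
    (hX : ∃ f : Fin k → X, Function.Injective f)
    (T : X → X) (lam : ℝ) (hlam0 : 0 ≤ lam) (hlam1 : lam < 1)
    (hT : ∀ x : Fin k → X, Function.Injective x → perim (T ∘ x) ≤ lam * perim x) :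
    Continuous T := by
  rw [continuous_iff_continuousAt]
  intro x
  by_cases hiso : (𝓝[≠] x).NeBot
  · -- x is not isolated
    rw [Metric.continuousAt_iff]
    intro ε hε
    set δ : ℝ := ε / (2 * k * (lam + 1)) with hδdef
    have hk0 : (0:ℝ) < k := by positivity
    have hδ : 0 < δ := by positivity
    refine ⟨δ, hδ, fun y hy => ?_⟩
    rcases eq_or_ne y x with rfl | hyx
    · simpa using hε
    -- the ball is infinite since x is not isolated
    have hball : (Metric.ball x δ).Infinite :=
      infinite_of_mem_nhds x (Metric.ball_mem_nhds x hδ)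
    have hS : (Metric.ball x δ \ {x, y}).Infinite :=
      hball.diff ((Set.finite_singleton y).insert x)
    set g : ℕ ↪ ↥(Metric.ball x δ \ {x, y}) := hS.natEmbedding _ with hg
    have hgball : ∀ n : ℕ, (g n : X) ∈ Metric.ball x δ := fun n => (g n).2.1
    have hgx : ∀ n : ℕ, (g n : X) ≠ x := fun n h => (g n).2.2 (Or.inl h)
    have hgy : ∀ n : ℕ, (g n : X) ≠ y := fun n h => (g n).2.2 (Or.inr h)
    have hginj : ∀ n m : ℕ, (g n : X) = (g m : X) → n = m := fun n m h =>
      g.injective (Subtype.ext h)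
    set w : Fin k → X := fun i => if i.1 = 0 then x else if i.1 = 1 then y else g i.1 with hw
    have hwball : ∀ i, w i ∈ Metric.ball x (δ) := by
      intro i
      simp only [hw]
      split_ifs with h1 h2
      · simpa using hδ
      · simpa [Metric.mem_ball] using hy
      · exact hgball _
    have hwinj : Function.Injective w := by
      intro i j hij
      simp only [hw] at hij
      split_ifs at hij with h1 h2 h3 h4 h5 h6 h7 h8
      all_goals first
        | (exact Fin.ext (by omega))
        | (exact absurd hij hyx.symm)
        | (exact absurd hij hyx)
        | (exact absurd hij.symm (hgx _))
        | (exact absurd hij (hgx _))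
        | (exact absurd hij.symm (hgy _))
        | (exact absurd hij (hgy _))
        | (exact Fin.ext (hginj _ _ hij))
    have hperim : perim w ≤ (k : ℝ) * (2 * δ) := by
      unfold perim
      calc ∑ i : Fin k, dist (w i) (w (i + 1))
          ≤ ∑ _i : Fin k, (2 * δ) := by
            apply Finset.sum_le_sum
            intro i _
            have h1 := hwball i
            have h2 := hwball (i + 1)
            rw [Metric.mem_ball] at h1 h2
            have := dist_triangle (w i) x (w (i + 1))
            rw [dist_comm x (w (i+1))] at this
            linarith
        _ = (k : ℝ) * (2 * δ) := by simp [Finset.sum_const]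
    have hterm : dist (T x) (T y) ≤ perim (T ∘ w) := by
      have h0 : (0 : Fin k).1 = 0 := rfl
      have h1 : ((0 : Fin k) + 1).1 = 1 := by
        have : (1 : Fin k).1 = 1 := by
          rw [Fin.val_one']
          exact Nat.mod_eq_of_lt (by omega)
        simpa using this
      have : dist ((T ∘ w) 0) ((T ∘ w) (0 + 1)) ≤ perim (T ∘ w) := by
        unfold perim
        exact Finset.single_le_sum (f := fun i : Fin k => dist ((T ∘ w) i) ((T ∘ w) (i+1))) (fun i _ => dist_nonneg) (Finset.mem_univ 0)
      have hw0 : w 0 = x := by simp [hw]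
      have hw1 : w (1 : Fin k) = y := by
        simp only [hw]
        rw [Fin.val_one', Nat.mod_eq_of_lt (by omega : 1 < k)]
        norm_num
      simpa [Function.comp, hw0, hw1] using this
    have hchain : dist (T x) (T y) ≤ lam * ((k : ℝ) * (2 * δ)) := by
      calc dist (T x) (T y) ≤ perim (T ∘ w) := hterm
        _ ≤ lam * perim w := hT w hwinj
        _ ≤ lam * ((k : ℝ) * (2 * δ)) := by
            apply mul_le_mul_of_nonneg_left hperim hlam0
    have hfin : lam * ((k : ℝ) * (2 * δ)) < ε := by
      have hl1 : (0:ℝ) < lam + 1 := by linarith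
      rw [hδdef]
      rw [div_eq_mul_inv]
      have hne : (2 * (k:ℝ) * (lam + 1)) ≠ 0 := by positivity
      rw [show lam * ((k:ℝ) * (2 * (ε * (2 * (k:ℝ) * (lam + 1))⁻¹)))
          = (lam * ε) * ((2 * (k:ℝ)) * (2 * (k:ℝ) * (lam + 1))⁻¹) by ring]
      have : ((2 * (k:ℝ)) * (2 * (k:ℝ) * (lam + 1))⁻¹) = (lam+1)⁻¹ := by
        field_simp
      rw [this]
      rw [mul_inv_lt_iff₀ hl1]
      nlinarith
    rw [dist_comm]
    exact lt_of_le_of_lt hchain hfin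
  · -- x is isolated
    have hopen : IsOpen ({x} : Set X) :=
      (isOpen_singleton_iff_punctured_nhds x).mpr (Filter.not_neBot.mp hiso)
    have hx : ({x} : Set X) ∈ 𝓝 x := hopen.mem_nhds rfl
    refine Filter.Tendsto.mono_left (tendsto_pure_nhds T x) ?_
    rwa [Filter.le_pure_iff]
end

section
/- Let (X,d) be a complete metric space with |X| ≥ 3 and let T : X → X be a perimetric contraction on k-polygons (3 ≤ k ≤ |X|). If T has no periodic points of prime period i for every i = 2, 3, ..., k−1, then T has a fixed point. -/
theorem stmt3 {X : Type*} [MetricSpace X] [CompleteSpace X] {k : ℕ} [NeZero k] (hk : 3 ≤ k)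
    (hX : ∃ f : Fin k → X, Function.Injective f)
    (T : X → X) (lam : ℝ) (hlam0 : 0 ≤ lam) (hlam1 : lam < 1)
    (hT : ∀ x : Fin k → X, Function.Injective x → perim (T ∘ x) ≤ lam * perim x)
    (hper : ∀ p, 2 ≤ p → p < k → ∀ x : X,
      ¬(T^[p] x = x ∧ ∀ i, 1 ≤ i → i < p → T^[i] x ≠ x)) :
    ∃ w : X, T w = w := by
  classical
  obtain ⟨f, hf⟩ := hX
  have hk0 : 0 < k := by omega
  have h1k : 1 < k := by omega
  have hval1 : ((1 : Fin k)).val = 1 := by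
    rw [Fin.val_one']
    exact Nat.mod_eq_of_lt h1k
  have perim_nonneg : ∀ x : Fin k → X, 0 ≤ perim x := fun x =>
    Finset.sum_nonneg fun i _ => dist_nonneg
  have dist_le_perim : ∀ (x : Fin k → X) (i : Fin k), dist (x i) (x (i+1)) ≤ perim x := by
    intro x i
    have := Finset.single_le_sum (f := fun j : Fin k => dist (x j) (x (j+1)))
      (fun j _ => dist_nonneg) (Finset.mem_univ i)
    simpa [perim] using this
  have hgeo : ∀ (P : ℕ → ℝ), (∀ n, P (n+1) ≤ lam * P n) → ∀ n, P n ≤ lam ^ n * P 0 := by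
    intro P hP n
    induction n with
    | zero => simp
    | succ n ih =>
      calc P (n+1) ≤ lam * P n := hP n
        _ ≤ lam * (lam ^ n * P 0) := by
            exact mul_le_mul_of_nonneg_left ih hlam0
        _ = lam ^ (n+1) * P 0 := by ring
  set x0 := f 0 with hx0
  set S : ℕ → X := fun n => T^[n] x0 with hSdef
  have hSsucc : ∀ n, S (n+1) = T (S n) := fun n => Function.iterate_succ_apply' T n x0
  by_cases hinj : Function.Injective S
  · -- Case 1: injective orbit
    set tup : ℕ → Fin k → X := fun n i => S (n + i.val) with htup
    have htupinj : ∀ n, Function.Injective (tup n) := by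
      intro n i j hij
      have h := hinj hij
      exact Fin.ext (by omega)
    have hTtup : ∀ n, T ∘ tup n = tup (n+1) := by
      intro n; funext i
      show T (S (n + i.val)) = S (n + 1 + i.val)
      rw [← hSsucc (n + i.val)]
      congr 1; omega
    have hP : ∀ n, perim (tup (n+1)) ≤ lam * perim (tup n) := by
      intro n
      rw [← hTtup n]
      exact hT (tup n) (htupinj n)
    have hPn := hgeo (fun n => perim (tup n)) hP
    have hdist : ∀ n, dist (S n) (S (n+1)) ≤ perim (tup 0) * lam ^ n := by
      intro n
      have h := dist_le_perim (tup n) 0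
      have e0 : tup n 0 = S n := by simp [htup]
      have e1 : tup n (0+1) = S (n+1) := by
        rw [zero_add]
        show S (n + (1 : Fin k).val) = S (n+1)
        rw [hval1]
      rw [e0, e1] at h
      calc dist (S n) (S (n+1)) ≤ perim (tup n) := h
        _ ≤ lam ^ n * perim (tup 0) := hPn n
        _ = perim (tup 0) * lam ^ n := by ring
    have hcauchy : CauchySeq S := cauchySeq_of_le_geometric lam (perim (tup 0)) hlam1 hdist
    obtain ⟨w, hw⟩ := cauchySeq_tendsto_of_complete hcauchy
    obtain ⟨N, hN⟩ : ∃ N, ∀ m, N ≤ m → S m ≠ w := by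
      by_cases hw' : ∃ m, S m = w
      · obtain ⟨m, hm⟩ := hw'
        refine ⟨m+1, fun n hn he => ?_⟩
        have := hinj (he.trans hm.symm)
        omega
      · exact ⟨0, fun m _ he => hw' ⟨m, he⟩⟩
    set u : ℕ → Fin k → X := fun n i => if i.val = 0 then w else S (n + i.val - 1) with hu
    have huinj : ∀ n, N ≤ n → Function.Injective (u n) := by
      intro n hn i j hij
      simp only [hu] at hij
      by_cases hi : i.val = 0 <;> by_cases hj : j.val = 0
      · exact Fin.ext (by omega)
      · rw [if_pos hi, if_neg hj] at hij
        exact absurd hij.symm (hN _ (by omega))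
      · rw [if_neg hi, if_pos hj] at hij
        exact absurd hij (hN _ (by omega))
      · rw [if_neg hi, if_neg hj] at hij
        have := hinj hij
        exact Fin.ext (by omega)
    have hentry : ∀ i : Fin k, Filter.Tendsto (fun n => u n i) Filter.atTop (nhds w) := by
      intro i
      by_cases hi : i.val = 0
      · simp only [hu, if_pos hi]
        exact tendsto_const_nhds
      · have he : (fun n => u n i) = (fun n => S (n + (i.val - 1))) := by
          funext n
          simp only [hu, if_neg hi]
          congr 1; omega
        rw [he]
        exact hw.comp (Filter.tendsto_add_atTop_nat _)
    have hperim0 : Filter.Tendsto (fun n => perim (u n)) Filter.atTop (nhds 0) := by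
      have h0 : Filter.Tendsto (fun n => ∑ i : Fin k, dist (u n i) (u n (i+1)))
          Filter.atTop (nhds (∑ _i : Fin k, (0:ℝ))) := by
        apply tendsto_finset_sum
        intro i _
        have := (hentry i).dist (hentry (i+1))
        simpa using this
      simpa [perim] using h0
    have hbound : ∀ n, N ≤ n → dist (T w) (S (n+1)) ≤ lam * perim (u n) := by
      intro n hn
      have h := hT (u n) (huinj n hn)
      have h0 := dist_le_perim (T ∘ u n) 0
      have e0 : (T ∘ u n) 0 = T w := by
        simp [hu]
      have e1 : (T ∘ u n) (0+1) = S (n+1) := by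
        rw [zero_add]
        show T (u n 1) = S (n+1)
        have : u n 1 = S n := by
          simp only [hu, hval1]
          norm_num
        rw [this, hSsucc]
      rw [e0, e1] at h0
      exact h0.trans h
    have hST : Filter.Tendsto (fun n => S (n+1)) Filter.atTop (nhds (T w)) := by
      rw [tendsto_iff_dist_tendsto_zero]
      refine squeeze_zero' (g := fun n => lam * perim (u n))
        (Filter.Eventually.of_forall fun n => dist_nonneg) ?_ ?_
      · refine Filter.eventually_atTop.2 ⟨N, fun n hn => ?_⟩
        rw [dist_comm]; exact hbound n hn
      · simpa using hperim0.const_mul lam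
    have hw' : Filter.Tendsto (fun n => S (n+1)) Filter.atTop (nhds w) :=
      hw.comp (Filter.tendsto_add_atTop_nat 1)
    exact ⟨w, tendsto_nhds_unique hST hw'⟩
  · -- Case 2: orbit not injective, eventual periodicity
    rw [Function.not_injective_iff] at hinj
    obtain ⟨a, b, hab, hne⟩ := hinj
    -- WLOG a < b
    have hkey : ∀ a b : ℕ, a < b → S a = S b → ∃ w : X, T w = w := by
      clear hab hne a b
      intro a b hlt hab
      have hp0' : T^[b - a] (S a) = S a := by
        have h1 : T^[(b-a) + a] x0 = T^[b-a] (T^[a] x0) := Function.iterate_add_apply T (b-a) a x0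
        have h2 : (b-a) + a = b := by omega
        rw [h2] at h1
        calc T^[b-a] (S a) = T^[b] x0 := h1.symm
          _ = S b := rfl
          _ = S a := hab.symm
      obtain ⟨y, hp0⟩ : ∃ y : X, T^[b - a] y = y := ⟨S a, hp0'⟩
      have hex : ∃ p, 0 < p ∧ T^[p] y = y := ⟨b - a, by omega, hp0⟩
      set p := Nat.find hex with hpdef
      obtain ⟨hppos, hTp⟩ := Nat.find_spec hex
      rw [← hpdef] at hppos hTp
      have hmin : ∀ i, 0 < i → i < p → T^[i] y ≠ y := by
        intro i hi hip h
        exact Nat.find_min hex hip ⟨hi, h⟩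
      rcases Nat.lt_or_ge p 2 with hp1 | hp2
      · -- p = 1
        have : p = 1 := by omega
        exact ⟨y, by rw [this] at hTp; simpa using hTp⟩
      rcases Nat.lt_or_ge p k with hpk | hkp
      · -- 2 ≤ p < k : contradicts hper
        exact absurd ⟨hTp, fun i hi1 hi2 => hmin i (by omega) hi2⟩ (hper p hp2 hpk y)
      · -- p ≥ k
        have hA : ∀ q, T^[p * q] y = y := by
          intro q
          induction q with
          | zero => simp
          | succ q ih =>
            have : p * (q+1) = p + p * q := by ring
            rw [this, Function.iterate_add_apply, ih, hTp]
        have hB : ∀ m, T^[m] y = T^[m % p] y := by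
          intro m
          conv_lhs => rw [show m = m % p + p * (m / p) from by
            rw [Nat.mod_add_div]]
          rw [Function.iterate_add_apply, hA]
        have hC : ∀ r s, r < s → s < p → T^[r] y ≠ T^[s] y := by
          intro r s hrs hsp he
          have h1 : T^[p - s] (T^[r] y) = T^[p - s] (T^[s] y) := by rw [he]
          rw [← Function.iterate_add_apply, ← Function.iterate_add_apply] at h1
          have h2 : p - s + s = p := by omega
          rw [h2, hTp] at h1
          exact hmin (p - s + r) (by omega) (by omega) h1
        have hC' : ∀ m n : ℕ, T^[m] y = T^[n] y → m % p = n % p := by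
          intro m n h
          rw [hB m, hB n] at h
          rcases lt_trichotomy (m % p) (n % p) with hlt' | heq | hgt
          · exact absurd h (hC _ _ hlt' (Nat.mod_lt _ hppos))
          · exact heq
          · exact absurd h.symm (hC _ _ hgt (Nat.mod_lt _ hppos))
        set v : ℕ → Fin k → X := fun j i => T^[j + i.val] y with hv
        have hvinj : ∀ j, Function.Injective (v j) := by
          intro j i i' h
          have h1 := hC' _ _ h
          have h2 : (j + i.val) % p = (j + i'.val) % p := h1
          have h3 : i.val % p = i'.val % p :=
            (Nat.ModEq.add_left_cancel' j h2)
          apply Fin.ext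
          rwa [Nat.mod_eq_of_lt (by omega), Nat.mod_eq_of_lt (by omega)] at h3
        have hTv : ∀ j, T ∘ v j = v (j+1) := by
          intro j; funext i
          show T (T^[j + i.val] y) = T^[j + 1 + i.val] y
          rw [← Function.iterate_succ_apply' T]
          congr 1; omega
        have hQ : ∀ j, perim (v (j+1)) ≤ lam * perim (v j) := by
          intro j
          rw [← hTv j]
          exact hT (v j) (hvinj j)
        have hQn := hgeo (fun j => perim (v j)) hQ p
        have hvp : v p = v 0 := by
          funext i
          show T^[p + i.val] y = T^[0 + i.val] y
          rw [show p + i.val = i.val + p from by omega, Function.iterate_add_apply, hTp]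
          congr 1; omega
        rw [hvp] at hQn
        have hlamp : lam ^ p < 1 := pow_lt_one₀ hlam0 hlam1 (by omega)
        have hQ0 : perim (v 0) = 0 := by
          have h1 : 0 ≤ perim (v 0) := perim_nonneg _
          nlinarith [hQn]
        have hd : dist (v 0 0) (v 0 (0+1)) ≤ perim (v 0) := dist_le_perim (v 0) 0
        rw [hQ0] at hd
        have e0 : v 0 0 = y := by simp [hv]
        have e1 : v 0 (0+1) = T y := by
          rw [zero_add]
          show T^[0 + (1 : Fin k).val] y = T y
          rw [hval1]
          simp
        rw [e0, e1] at hd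
        have : T y = y := by
          have := dist_le_zero.mp hd
          exact this.symm
        exact ⟨y, this⟩
    rcases lt_or_gt_of_ne hne with h | h
    · exact hkey a b h hab
    · exact hkey b a h hab.symm
end

section
/- A perimetric contraction on k-polygons has at most k−1 fixed points. -/
theorem stmt4 {X : Type*} [MetricSpace X] {k : ℕ} [NeZero k] (hk : 3 ≤ k)
    (hX : ∃ f : Fin k → X, Function.Injective f)
    (T : X → X) (lam : ℝ) (hlam0 : 0 ≤ lam) (hlam1 : lam < 1)
    (hT : ∀ x : Fin k → X, Function.Injective x → perim (T ∘ x) ≤ lam * perim x) :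
    ∀ s : Finset X, (∀ x ∈ s, T x = x) → s.card ≤ k - 1 := by
  intro s hs
  by_contra h
  push_neg at h
  have hks : k ≤ s.card := by omega
  obtain ⟨t, hts, htc⟩ := Finset.exists_subset_card_eq hks
  have e : Fin k ≃ {a // a ∈ t} := (t.equivFin.trans (finCongr htc)).symm
  set x : Fin k → X := fun i => (e i : X) with hx
  have hinj : Function.Injective x := by
    intro a b hab
    exact e.injective (Subtype.ext hab)
  have hfix : ∀ i, T (x i) = x i := fun i => hs _ (hts (e i).2)
  have hTx : T ∘ x = x := funext fun i => hfix i
  have hle := hT x hinj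
  rw [hTx] at hle
  have hpos : 0 < perim x := by
    have h01 : (0 : Fin k) ≠ 1 := by
      simp [Fin.ext_iff, Fin.val_one', Nat.mod_eq_of_lt (by omega : 1 < k)]
    have hd : 0 < dist (x 0) (x (0 + 1)) := by
      rw [dist_pos]
      intro hc
      exact h01 (hinj (by simpa using hc))
    calc 0 < dist (x 0) (x (0 + 1)) := hd
      _ ≤ ∑ i : Fin k, dist (x i) (x (i + 1)) :=
        Finset.single_le_sum (f := fun i => dist (x i) (x (i + 1))) (fun i _ => dist_nonneg) (Finset.mem_univ 0)
  nlinarith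
end

section
/- Let T be a perimetric contraction on k-polygons on a complete metric space, and suppose x* is a fixed point of T that is the limit of an iteration sequence x_i = T x_{i-1} with x* ≠ x_i for all i ≥ 0. Then x* is the unique fixed point of T. -/
open Fin.NatCast Fin.CommRing in
lemma perim_lower {X : Type*} [MetricSpace X] {k : ℕ} [NeZero k] (hk : 2 ≤ k)
    (q : Fin k → X) : dist (q 0) (q 1) + dist (q 1) (q 0) ≤ perim q := by
  set f : ℕ → ℝ := fun j => dist (q (j : Fin k)) (q ((j : Fin k) + 1)) with hf
  have h1 : perim q = ∑ j ∈ Finset.range k, f j := by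
    rw [perim, ← Fin.sum_univ_eq_sum_range]
    exact Finset.sum_congr rfl fun i _ => by simp [hf, Fin.cast_val_eq_self]
  have h2 : ∑ j ∈ Finset.range k, f j = (∑ i ∈ Finset.range (k-1), f (i+1)) + f 0 := by
    obtain ⟨m, rfl⟩ : ∃ m, k = m + 1 := ⟨k-1, by omega⟩
    rw [Finset.sum_range_succ']
    simp
  have hf0 : f 0 = dist (q 0) (q 1) := by simp [hf]
  have h3 : dist (q 1) (q 0) ≤ ∑ i ∈ Finset.range (k-1), f (i+1) := by
    have key := dist_le_range_sum_dist (fun i => q ((1 + i : ℕ) : Fin k)) (k-1)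
    have e1 : ((1 + 0 : ℕ) : Fin k) = 1 := by push_cast; ring
    have e2 : ((1 + (k-1) : ℕ) : Fin k) = 0 := by
      have : 1 + (k-1) = k := by omega
      rw [this]; exact Fin.natCast_self k
    simp only [e1, e2] at key
    refine le_trans key (le_of_eq (Finset.sum_congr rfl fun i _ => ?_))
    simp only [hf]
    congr 1 <;> push_cast <;> ring_nf
  linarith

lemma exists_points {X : Type*} [MetricSpace X] (x : ℕ → X) (xs z : X)
    (hlim : Filter.Tendsto x Filter.atTop (nhds xs)) (hne : ∀ i, xs ≠ x i)
    (hz : z ≠ xs) {ε : ℝ} (hε : 0 < ε) (m : ℕ) :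
    ∃ t : Finset X, t.card = m ∧ ∀ v ∈ t, v ≠ xs ∧ v ≠ z ∧ dist v xs < ε := by
  classical
  induction m with
  | zero => exact ⟨∅, by simp⟩
  | succ m ih =>
    obtain ⟨t, hcard, hprop⟩ := ih
    set s : Finset X := insert z t with hs
    have hsne : z ∈ s := Finset.mem_insert_self _ _
    set δ := s.inf' ⟨z, hsne⟩ (fun v => dist v xs) with hδdef
    have hδpos : 0 < δ := by
      rw [hδdef]; refine (Finset.lt_inf'_iff _).2 ?_
      intro v hv
      rcases Finset.mem_insert.mp hv with rfl | hv
      · exact dist_pos.mpr hz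
      · exact dist_pos.mpr (hprop v hv).1
    obtain ⟨N, hN⟩ := Metric.tendsto_atTop.mp hlim (min δ ε) (lt_min hδpos hε)
    have h1 : dist (x N) xs < min δ ε := hN N le_rfl
    have hnotin : x N ∉ s := fun hmem => by
      have := Finset.inf'_le (fun v => dist v xs) hmem
      rw [← hδdef] at this
      exact absurd this (not_le.mpr (lt_of_lt_of_le h1 (min_le_left _ _)))
    refine ⟨insert (x N) t, ?_, ?_⟩
    · rw [Finset.card_insert_of_notMem (fun h => hnotin (Finset.mem_insert_of_mem h)), hcard]
    · intro v hv
      rcases Finset.mem_insert.mp hv with rfl | hv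
      · exact ⟨Ne.symm (hne N), fun h => hnotin (h ▸ hsne),
          lt_of_lt_of_le h1 (min_le_right _ _)⟩
      · exact hprop v hv

theorem stmt5 {X : Type*} [MetricSpace X] [CompleteSpace X] {k : ℕ} [NeZero k] (hk : 3 ≤ k)
    (hX : ∃ f : Fin k → X, Function.Injective f)
    (T : X → X) (lam : ℝ) (hlam0 : 0 ≤ lam) (hlam1 : lam < 1)
    (hT : ∀ x : Fin k → X, Function.Injective x → perim (T ∘ x) ≤ lam * perim x)
    (x : ℕ → X) (hx : ∀ n, x (n + 1) = T (x n)) (xs : X)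
    (hlim : Filter.Tendsto x Filter.atTop (nhds xs)) (hfix : T xs = xs)
    (hne : ∀ i, xs ≠ x i) :
    ∀ z : X, T z = z → z = xs := by
  classical
  intro z hz
  by_contra hzx
  set d := dist z xs with hd
  have hdpos : 0 < d := dist_pos.mpr hzx
  have hv1 : ((1 : Fin k) : ℕ) = 1 := by rw [Fin.val_one']; exact Nat.mod_eq_of_lt (by omega)
  have key : ∀ ε : ℝ, 0 < ε → 2 * d ≤ lam * (2 * (d + k * ε)) := by
    intro ε hε
    obtain ⟨t, hcard, hprop⟩ := exists_points x xs z hlim hne hzx hε (k - 2)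
    set y : Fin (k-2) → X := fun i => (t.equivFin.symm (Fin.cast hcard.symm i) : X) with hy
    have ymem : ∀ i, y i ∈ t := fun i => (t.equivFin.symm _).2
    have yinj : Function.Injective y := by
      intro a b hab
      have := t.equivFin.symm.injective (Subtype.coe_injective hab)
      exact Fin.ext (by simpa using congrArg Fin.val this)
    have hy_ne_xs : ∀ i, y i ≠ xs := fun i => (hprop _ (ymem i)).1
    have hy_ne_z : ∀ i, y i ≠ z := fun i => (hprop _ (ymem i)).2.1
    have hy_dist : ∀ i, dist (y i) xs < ε := fun i => (hprop _ (ymem i)).2.2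
    set p : Fin k → X := fun i =>
      if h0 : (i : ℕ) = 0 then z else if h1 : (i : ℕ) = 1 then xs
      else y ⟨(i : ℕ) - 2, by have := i.isLt; omega⟩ with hp
    have p0 : p 0 = z := by simp [hp]
    have p1 : p 1 = xs := by
      simp only [hp]
      rw [dif_neg (by simp [hv1]; omega), dif_pos hv1]
    have pinj : Function.Injective p := by
      intro i j hij
      simp only [hp] at hij
      split_ifs at hij with h1 h2 h3 h4 h5 h6 h7 h8
      all_goals try exact Fin.ext (by omega)
      · exact absurd hij hzx
      · exact absurd hij (Ne.symm (hy_ne_z _))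
      · exact absurd hij (Ne.symm hzx)
      · exact absurd hij (Ne.symm (hy_ne_xs _))
      · exact absurd hij (hy_ne_z _)
      · exact absurd hij (hy_ne_xs _)
      · have := congrArg Fin.val (yinj hij)
        simp only at this
        exact Fin.ext (by omega)
    have hub : perim p ≤ 2 * (d + k * ε) := by
      have step1 : perim p ≤ ∑ i : Fin k, (dist (p i) xs + dist (p (i+1)) xs) := by
        refine Finset.sum_le_sum fun i _ => ?_
        calc dist (p i) (p (i+1)) ≤ dist (p i) xs + dist xs (p (i+1)) := dist_triangle _ _ _
        _ = _ := by rw [dist_comm xs]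
      have step2 : ∑ i : Fin k, (dist (p i) xs + dist (p (i+1)) xs)
          = 2 * ∑ i : Fin k, dist (p i) xs := by
        rw [Finset.sum_add_distrib]
        have : ∑ i : Fin k, dist (p (i+1)) xs = ∑ i : Fin k, dist (p i) xs :=
          Fintype.sum_equiv (Equiv.addRight (1 : Fin k)) _ _ (fun i => rfl)
        rw [this]; ring
      have step3 : ∑ i : Fin k, dist (p i) xs ≤ d + k * ε := by
        rw [← Finset.add_sum_erase _ _ (Finset.mem_univ (0 : Fin k))]
        have hbd : ∀ i ∈ Finset.univ.erase (0 : Fin k), dist (p i) xs ≤ ε := by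
          intro i hi
          have hi0 : (i : ℕ) ≠ 0 := fun h =>
            (Finset.mem_erase.mp hi).1 (Fin.ext (by simp [h]))
          by_cases hi1 : (i : ℕ) = 1
          · have : p i = xs := by simp only [hp]; rw [dif_neg hi0, dif_pos hi1]
            simp [this]; linarith
          · have : p i = y ⟨(i : ℕ) - 2, by have := i.isLt; omega⟩ := by
              simp only [hp]; rw [dif_neg hi0, dif_neg hi1]
            rw [this]; exact le_of_lt (hy_dist _)
        have hsum := Finset.sum_le_card_nsmul _ _ ε hbd
        have hcarde : (Finset.univ.erase (0 : Fin k)).card = k - 1 := by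
          rw [Finset.card_erase_of_mem (Finset.mem_univ _)]
          simp
        rw [hcarde] at hsum
        have : ((k-1 : ℕ) : ℝ) * ε ≤ (k : ℝ) * ε := by
          apply mul_le_mul_of_nonneg_right _ (le_of_lt hε)
          exact_mod_cast Nat.sub_le k 1
        rw [p0, ← hd]
        have hsum' : ∑ i ∈ Finset.univ.erase (0 : Fin k), dist (p i) xs ≤ ((k-1:ℕ):ℝ) * ε := by
          simpa [nsmul_eq_mul] using hsum
        linarith
      calc perim p ≤ 2 * ∑ i : Fin k, dist (p i) xs := by rw [← step2]; exact step1
      _ ≤ 2 * (d + k * ε) := by linarith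
    have hlb : 2 * d ≤ perim (T ∘ p) := by
      have h := perim_lower (by omega) (T ∘ p)
      have c0 : (T ∘ p) 0 = z := by simp [Function.comp, p0, hz]
      have c1 : (T ∘ p) 1 = xs := by simp [Function.comp, p1, hfix]
      rw [c0, c1] at h
      have hcomm : dist xs z = dist z xs := dist_comm xs z
      linarith [h]
    calc 2 * d ≤ perim (T ∘ p) := hlb
    _ ≤ lam * perim p := hT p pinj
    _ ≤ lam * (2 * (d + k * ε)) := mul_le_mul_of_nonneg_left hub hlam0
  have hfin : 2 * d ≤ lam * (2 * d) := by
    apply le_of_forall_pos_le_add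
    intro ε' hε'
    have hden : (0:ℝ) < 2 * lam * k + 1 := by positivity
    have hεp : 0 < ε' / (2 * lam * k + 1) := by positivity
    have := key _ hεp
    have hkε : 2 * lam * (k * (ε' / (2 * lam * k + 1))) ≤ ε' := by
      rw [div_eq_mul_inv]
      have h2 : 2 * lam * (k * (ε' * (2 * lam * k + 1)⁻¹)) = ε' * ((2*lam*k) / (2*lam*k+1)) := by
        field_simp
      rw [h2]
      have : (2*lam*k) / (2*lam*k+1) ≤ 1 := by
        rw [div_le_one hden]; linarith
      nlinarith
    nlinarith
  nlinarith
end

section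
/- Let T be a perimetric contraction on k-polygons with coefficient λ on a metric space X with |X| ≥ 3 and 3 ≤ k ≤ |X|. If x is an accumulation point of X, then d(Tx,Ty) ≤ λ d(x,y) for all y ∈ X. -/
open Fin.NatCast in
lemma twoside {X : Type*} [MetricSpace X] {k : ℕ} [NeZero k] (hk : 1 ≤ k)
    (q : Fin k → X) : 2 * dist (q 0) (q 1) ≤ perim q := by
  have hk0 : 0 < k := hk
  set f : ℕ → ℝ := fun m => dist (q (m : Fin k)) (q ((m : Fin k) + 1)) with hf
  have h1 : perim q = ∑ m ∈ Finset.range k, f m := by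
    rw [perim, ← Fin.sum_univ_eq_sum_range]
    simp [hf, Fin.cast_val_eq_self]
  have h2 : ∑ m ∈ Finset.range k, f m = (∑ m ∈ Finset.range (k-1), f (m+1)) + f 0 := by
    have : k = (k-1) + 1 := by omega
    conv_lhs => rw [this]
    rw [Finset.sum_range_succ']
  have h3 : dist (q 1) (q 0) ≤ ∑ m ∈ Finset.range (k-1), f (m+1) := by
    have := dist_le_range_sum_dist (fun m => q ((1 + m : ℕ) : Fin k)) (k-1)
    have e1 : ((1 + 0 : ℕ) : Fin k) = 1 := by norm_num
    have e2 : ((1 + (k-1) : ℕ) : Fin k) = 0 := by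
      have : 1 + (k-1) = k := by omega
      rw [this]; exact Fin.natCast_self k
    rw [e1, e2] at this
    refine this.trans (le_of_eq (Finset.sum_congr rfl fun m hm => ?_))
    have e3 : ((1 + (m+1) : ℕ) : Fin k) = ((m+1 : ℕ) : Fin k) + 1 := by push_cast; abel
    have e4 : ((1 + m : ℕ) : Fin k) = ((m+1 : ℕ) : Fin k) := by norm_num [Nat.add_comm]
    rw [e3, e4, hf]
  have h4 : f 0 = dist (q 0) (q 1) := by
    simp [hf]
  rw [h1, h2, h4]
  have := dist_comm (q 0) (q 1)
  linarith [h3]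

theorem stmt8 {X : Type*} [MetricSpace X] {k : ℕ} [NeZero k] (hk : 3 ≤ k)
    (hX : ∃ f : Fin k → X, Function.Injective f)
    (T : X → X) (lam : ℝ) (hlam0 : 0 ≤ lam) (hlam1 : lam < 1)
    (hT : ∀ x : Fin k → X, Function.Injective x → perim (T ∘ x) ≤ lam * perim x)
    (x : X) (hacc : ∀ ε > 0, (Metric.ball x ε).Infinite) :
    ∀ y : X, dist (T x) (T y) ≤ lam * dist x y := by
  intro y
  rcases eq_or_ne y x with rfl | hyx
  · simp
  have hxy : x ≠ y := hyx.symm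
  have h1v : (1 : Fin k).val = 1 := by
    rw [Fin.val_one']; exact Nat.mod_eq_of_lt (by omega)
  apply le_of_forall_pos_le_add
  intro δ hδ
  set ε : ℝ := δ / (k + 1) with hεdef
  have hε : 0 < ε := by positivity
  have hinf : (Metric.ball x ε \ {x, y}).Infinite :=
    (hacc ε hε).diff ((Set.finite_singleton y).insert x)
  have F : ℕ ↪ (Metric.ball x ε \ {x, y} : Set X) := hinf.natEmbedding
  set g : ℕ → X := fun n => (F n : X) with hgdef
  have hg_inj : Function.Injective g :=
    Subtype.val_injective.comp F.injective
  have hg_mem : ∀ n, g n ∈ Metric.ball x ε \ {x, y} := fun n => (F n).2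
  have hgx : ∀ n, g n ≠ x := fun n h => (hg_mem n).2 (by simp [h])
  have hgy : ∀ n, g n ≠ y := fun n h => (hg_mem n).2 (by simp [h])
  have hgball : ∀ n, dist (g n) x ≤ ε := fun n => le_of_lt (Metric.mem_ball.mp (hg_mem n).1)
  set p : Fin k → X := fun i => if i.val = 0 then x else if i.val = 1 then y else g (i.val - 2)
    with hpdef
  have hp0 : p 0 = x := by simp [hpdef]
  have hp1 : p 1 = y := by
    simp only [hpdef, h1v]
    norm_num
  have hpinj : Function.Injective p := by
    intro i j hij
    simp only [hpdef] at hij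
    split_ifs at hij <;>
      first
        | exact Fin.ext (by omega)
        | exact absurd hij hxy
        | exact absurd hij (Ne.symm hxy)
        | exact absurd hij (hgx _)
        | exact absurd hij (Ne.symm (hgx _))
        | exact absurd hij (hgy _)
        | exact absurd hij (Ne.symm (hgy _))
        | exact Fin.ext (by have := hg_inj hij; omega)
  have hbound : ∀ i : Fin k, dist (p i) (p (i + 1)) ≤
      (if i = (0 : Fin k) then dist x y else 0) +
      (if i = (1 : Fin k) then dist x y else 0) + 2 * ε := by
    intro i
    rcases eq_or_ne i 0 with rfl | hi0
    · have e : (0 : Fin k) + 1 = 1 := by rw [zero_add]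
      rw [e, hp0, hp1]
      have h01 : (0 : Fin k) ≠ 1 := by simp; omega
      simp [h01]
      linarith
    rcases eq_or_ne i 1 with rfl | hi1
    · have hv : ((1 : Fin k) + 1).val = 2 := by
        rw [Fin.val_add, h1v]
        exact Nat.mod_eq_of_lt (by omega)
      have hp2 : p (1 + 1) = g 0 := by
        simp only [hpdef, hv]
        norm_num
      rw [hp1, hp2]
      have h10 : (1 : Fin k) ≠ 0 := by simp; omega
      simp only [if_neg h10, if_pos rfl, zero_add]
      calc dist y (g 0) ≤ dist y x + dist x (g 0) := dist_triangle _ _ _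
        _ ≤ dist x y + ε := by
            rw [dist_comm y x]
            have := hgball 0
            rw [dist_comm x (g 0)]
            linarith
        _ ≤ dist x y + 2 * ε := by linarith
    · have hik : i.val < k := i.isLt
      have hiv0 : i.val ≠ 0 := by intro h; exact hi0 (Fin.ext (by rw [h]; simp))
      have hiv1 : i.val ≠ 1 := by
        simpa [Fin.ext_iff, Nat.mod_eq_of_lt (show 1 < k by omega)] using hi1
      have hpi : dist (p i) x ≤ ε := by
        simp only [hpdef, if_neg hiv0, if_neg hiv1]
        exact hgball _
      have hj : (i + 1).val = (i.val + 1) % k := by rw [Fin.val_add, h1v]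
      have hpi1 : dist x (p (i + 1)) ≤ ε := by
        by_cases hlast : i.val = k - 1
        · have hz : (i + 1).val = 0 := by
            have e : i.val + 1 = k := by omega
            rw [hj, e, Nat.mod_self]
          have : p (i + 1) = x := by simp only [hpdef, hz]; norm_num
          rw [this, dist_self]; linarith
        · have hz0 : (i + 1).val ≠ 0 := by
            rw [hj, Nat.mod_eq_of_lt (by omega)]; omega
          have hz1 : (i + 1).val ≠ 1 := by
            rw [hj, Nat.mod_eq_of_lt (by omega)]; omega
          have : p (i + 1) = g ((i + 1).val - 2) := by
            simp only [hpdef, if_neg hz0, if_neg hz1]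
          rw [this, dist_comm]
          exact hgball _
      have := dist_triangle (p i) x (p (i + 1))
      simp [hi0, hi1]
      linarith
  have hperim : perim p ≤ 2 * dist x y + 2 * k * ε := by
    rw [perim]
    calc ∑ i : Fin k, dist (p i) (p (i + 1))
        ≤ ∑ i : Fin k, ((if i = (0 : Fin k) then dist x y else 0) +
            (if i = (1 : Fin k) then dist x y else 0) + 2 * ε) :=
          Finset.sum_le_sum fun i _ => hbound i
      _ = dist x y + dist x y + k * (2 * ε) := by
          rw [Finset.sum_add_distrib, Finset.sum_add_distrib, Finset.sum_const,
            Finset.sum_ite_eq' Finset.univ (0 : Fin k) (fun _ => dist x y),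
            Finset.sum_ite_eq' Finset.univ (1 : Fin k) (fun _ => dist x y)]
          simp [Finset.card_univ]
          try ring
      _ ≤ 2 * dist x y + 2 * k * ε := by ring_nf; linarith
  have h2s := twoside (by omega : 1 ≤ k) (T ∘ p)
  have hTp := hT p hpinj
  have hc0 : (T ∘ p) 0 = T x := by simp [hp0]
  have hc1 : (T ∘ p) 1 = T y := by simp [hp1]
  rw [hc0, hc1] at h2s
  have key : 2 * dist (T x) (T y) ≤ lam * (2 * dist x y + 2 * k * ε) := by
    calc 2 * dist (T x) (T y) ≤ perim (T ∘ p) := h2s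
      _ ≤ lam * perim p := hTp
      _ ≤ lam * (2 * dist x y + 2 * k * ε) := by
          exact mul_le_mul_of_nonneg_left hperim hlam0
  have e1 : lam * ((k : ℝ) * ε) ≤ (k : ℝ) * ε :=
    mul_le_of_le_one_left (by positivity) hlam1.le
  have e2 : (k : ℝ) * ε ≤ δ := by
    rw [hεdef, mul_div_assoc']
    rw [div_le_iff₀ (by positivity : (0:ℝ) < (k:ℝ) + 1)]
    nlinarith [hδ.le]
  nlinarith [key, e1, e2]
end

section
/- If every point of a metric space X (with |X| ≥ 3) is an accumulation point and T : X → X is a perimetric contraction on k-polygons with coefficient λ (3 ≤ k ≤ |X|), then T is a Banach contraction with coefficient λ. -/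
open Fin.NatCast in
lemma two_dist_le_perim {X : Type*} [MetricSpace X] {k : ℕ} [NeZero k] (hk : 2 ≤ k)
    (g : Fin k → X) : 2 * dist (g 0) (g 1) ≤ perim g := by
  have h1 : perim g = ∑ j ∈ Finset.range k, dist (g j) (g ((j : Fin k) + 1)) := by
    rw [perim, ← Fin.sum_univ_eq_sum_range (fun j => dist (g (j : Fin k)) (g ((j : Fin k) + 1)))]
    simp [Fin.cast_val_eq_self]
  have h2 : ∑ j ∈ Finset.range k, dist (g j) (g ((j : Fin k) + 1))
      = dist (g 0) (g 1) + ∑ j ∈ Finset.Ico 1 k, dist (g j) (g ((j : Fin k) + 1)) := by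
    rw [Finset.range_eq_Ico, Finset.sum_eq_sum_Ico_succ_bot (by omega)]
    norm_num
  have h3 : ∑ j ∈ Finset.Ico 1 k, dist (g j) (g ((j : Fin k) + 1))
      = ∑ j ∈ Finset.range (k - 1), dist (g (1 + j : ℕ)) (g ((1 + j : ℕ) + 1)) := by
    rw [Finset.sum_Ico_eq_sum_range]
  set h : ℕ → X := fun j => g ((1 + j : ℕ) : Fin k) with hh
  have h4 : dist (h 0) (h (k - 1)) ≤ ∑ j ∈ Finset.range (k - 1), dist (h j) (h (j + 1)) :=
    dist_le_range_sum_dist h (k - 1)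
  have h0 : h 0 = g 1 := by simp [hh]
  have hlast : h (k - 1) = g 0 := by
    have h6 : ((1 + (k - 1) : ℕ) : Fin k) = 0 := by
      rw [(by omega : 1 + (k - 1) = k)]; exact Fin.natCast_self k
    simp only [hh, h6]
  have h5 : ∀ j, dist (h j) (h (j + 1)) = dist (g (1 + j : ℕ)) (g ((1 + j : ℕ) + 1)) := by
    intro j
    have : ((1 + (j + 1) : ℕ) : Fin k) = ((1 + j : ℕ) : Fin k) + 1 := by rw [← Nat.cast_add_one, add_assoc]
    simp only [hh, this, add_assoc]
  rw [h1, h2, h3]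
  have := h4
  rw [h0, hlast] at this
  simp only [h5] at this
  rw [dist_comm (g 1) (g 0)] at this
  linarith

theorem stmt9 {X : Type*} [MetricSpace X] {k : ℕ} [NeZero k] (hk : 3 ≤ k)
    (hX : ∃ f : Fin k → X, Function.Injective f)
    (T : X → X) (lam : ℝ) (hlam0 : 0 ≤ lam) (hlam1 : lam < 1)
    (hT : ∀ x : Fin k → X, Function.Injective x → perim (T ∘ x) ≤ lam * perim x)
    (hacc : ∀ x : X, ∀ ε > 0, (Metric.ball x ε).Infinite) :
    ∀ x y : X, dist (T x) (T y) ≤ lam * dist x y := by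
  intro x y
  rcases eq_or_ne x y with rfl | hxy
  · simp
  have h10 : ((1 : Fin k) : ℕ) = 1 := by
    rw [Fin.val_one', Nat.mod_eq_of_lt (by omega)]
  have h01 : (0 : Fin k) ≠ 1 := by
    intro h
    have := congrArg Fin.val h
    rw [h10] at this
    simp at this
  have hkR : (0 : ℝ) < k := by exact_mod_cast (by omega : 0 < k)
  refine le_of_forall_pos_le_add ?_
  intro δ hδ
  set ε := δ / k with hεdef
  have hε0 : 0 < ε := div_pos hδ hkR
  have hS : (Metric.ball y ε \ {x, y}).Infinite :=
    (hacc y ε hε0).diff (Set.toFinite {x, y})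
  set e := hS.natEmbedding with he
  set f : Fin k → X := fun i => if i = 0 then x else if i = 1 then y else (e i.val : X) with hf
  have hf0 : f 0 = x := by simp [hf]
  have hf1 : f 1 = y := by simp [hf, Ne.symm h01]
  have hfS : ∀ i : Fin k, i ≠ 0 → i ≠ 1 → (f i : X) ∈ Metric.ball y ε \ {x, y} := by
    intro i hi0 hi1
    simp only [hf, if_neg hi0, if_neg hi1]
    exact (e i.val).2
  have hinj : Function.Injective f := by
    intro i j hij
    by_contra hne
    rcases eq_or_ne i 0 with rfl | hi0
    · rcases eq_or_ne j 0 with rfl | hj0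
      · exact hne rfl
      rcases eq_or_ne j 1 with rfl | hj1
      · exact hxy (by rw [hf0, hf1] at hij; exact hij)
      · exact (hfS j hj0 hj1).2 (Or.inl (by rw [← hij, hf0]))
    rcases eq_or_ne i 1 with rfl | hi1
    · rcases eq_or_ne j 0 with rfl | hj0
      · exact hxy (by rw [hf0, hf1] at hij; exact hij.symm)
      rcases eq_or_ne j 1 with rfl | hj1
      · exact hne rfl
      · exact (hfS j hj0 hj1).2 (Or.inr (by rw [← hij, hf1]; rfl))
    rcases eq_or_ne j 0 with rfl | hj0
    · exact (hfS i hi0 hi1).2 (Or.inl (by rw [hij, hf0]))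
    rcases eq_or_ne j 1 with rfl | hj1
    · exact (hfS i hi0 hi1).2 (Or.inr (by rw [hij, hf1]; rfl))
    · apply hne
      have : (e i.val : X) = (e j.val : X) := by
        simpa [hf, if_neg hi0, if_neg hi1, if_neg hj0, if_neg hj1] using hij
      have := e.injective (Subtype.coe_injective this)
      exact Fin.val_injective this
  -- upper bound on perim f
  have step1 : perim f ≤ ∑ i : Fin k, (dist (f i) y + dist y (f (i + 1))) :=
    Finset.sum_le_sum (fun i _ => dist_triangle _ _ _)
  have step3 : ∑ i : Fin k, dist y (f (i + 1)) = ∑ i : Fin k, dist (f i) y := by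
    rw [Fintype.sum_equiv (Equiv.addRight (1 : Fin k)) (fun i => dist y (f (i + 1)))
      (fun i => dist y (f i)) (fun i => rfl)]
    simp [dist_comm]
  have step4 : ∑ i : Fin k, dist (f i) y ≤ dist x y + (k - 1 : ℕ) * ε := by
    rw [← Finset.add_sum_erase _ _ (Finset.mem_univ (0 : Fin k)), hf0]
    have hcard : (Finset.univ.erase (0 : Fin k)).card = k - 1 := by
      rw [Finset.card_erase_of_mem (Finset.mem_univ _)]
      simp
    have : ∑ i ∈ Finset.univ.erase (0 : Fin k), dist (f i) y ≤ (k - 1 : ℕ) * ε := by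
      calc ∑ i ∈ Finset.univ.erase (0 : Fin k), dist (f i) y
          ≤ (Finset.univ.erase (0 : Fin k)).card • ε := by
            apply Finset.sum_le_card_nsmul
            intro i hi
            have hi0 : i ≠ 0 := Finset.ne_of_mem_erase hi
            rcases eq_or_ne i 1 with rfl | hi1
            · rw [hf1]; simp [le_of_lt hε0]
            · exact le_of_lt (by simpa [Metric.mem_ball] using (hfS i hi0 hi1).1)
        _ = (k - 1 : ℕ) * ε := by rw [hcard]; simp [nsmul_eq_mul]
    linarith
  have hub : perim f ≤ 2 * dist x y + 2 * (k - 1 : ℕ) * ε := by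
    rw [Finset.sum_add_distrib] at step1
    rw [step3] at step1
    linarith
  -- lower bound
  have hlb : 2 * dist (T x) (T y) ≤ perim (T ∘ f) := by
    have := two_dist_le_perim (by omega) (T ∘ f)
    simpa [Function.comp, hf0, hf1] using this
  have hmain := hT f hinj
  have hδeq : (k : ℝ) * ε = δ := by
    rw [hεdef]; field_simp
  have hk1 : ((k - 1 : ℕ) : ℝ) ≤ (k : ℝ) := by
    exact_mod_cast Nat.sub_le k 1
  have : 2 * dist (T x) (T y) ≤ lam * (2 * dist x y + 2 * (k - 1 : ℕ) * ε) := by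
    calc 2 * dist (T x) (T y) ≤ perim (T ∘ f) := hlb
      _ ≤ lam * perim f := hmain
      _ ≤ lam * (2 * dist x y + 2 * (k - 1 : ℕ) * ε) := by
          apply mul_le_mul_of_nonneg_left hub hlam0
  have hfin : lam * ((k - 1 : ℕ) : ℝ) * ε ≤ δ := by
    calc lam * ((k - 1 : ℕ) : ℝ) * ε ≤ 1 * (k : ℝ) * ε := by
          apply mul_le_mul_of_nonneg_right _ (le_of_lt hε0)
          apply mul_le_mul (le_of_lt hlam1) hk1 (by positivity) zero_le_one
      _ = δ := by rw [one_mul, hδeq]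
  nlinarith [dist_nonneg (x := T x) (y := T y)]
end

section
/- Let T be a continuous Kannan-type perimetric contraction on k-polygons with coefficient μ ∈ [0, 2/k), on a metric space X with |X| ≥ 3, 3 ≤ k ≤ |X|. If z is an accumulation point of X, then 2 d(Tz,Ty) ≤ μ((k−1) d(z,Tz) + d(y,Ty)) for all y ∈ X. -/
theorem stmt11 {X : Type*} [MetricSpace X] {k : ℕ} [NeZero k] (hk : 3 ≤ k)
    (hX : ∃ f : Fin k → X, Function.Injective f)
    (T : X → X) (hcont : Continuous T)
    (μ : ℝ) (hμ0 : 0 ≤ μ) (hμ1 : μ < 2 / (k : ℝ))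
    (hT : ∀ x : Fin k → X, Function.Injective x →
      perim (T ∘ x) ≤ μ * ∑ i : Fin k, dist (x i) (T (x i)))
    (z : X) (hacc : ∀ ε > 0, (Metric.ball z ε).Infinite) :
    ∀ y : X, 2 * dist (T z) (T y) ≤ μ * (((k : ℝ) - 1) * dist z (T z) + dist y (T y)) := by
  obtain ⟨m, rfl⟩ : ∃ m, k = m + 3 := ⟨k - 3, by omega⟩
  intro y
  by_cases hyz : y = z
  · subst hyz
    simp only [dist_self, mul_zero]
    have hm : (0:ℝ) ≤ (m:ℝ) := Nat.cast_nonneg m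
    push_cast
    have h1 : (0:ℝ) ≤ ((m:ℝ) + 3 - 1) * dist y (T y) + dist y (T y) := by
      have := dist_nonneg (x := y) (y := T y)
      nlinarith
    nlinarith
  -- main case : y ≠ z
  have hkey : ∀ δ > (0:ℝ), 2 * dist (T z) (T y) ≤
      μ * ((((m:ℕ)+3 : ℝ) - 1) * dist z (T z) + dist y (T y)) + (1 + 2*μ*((m:ℝ)+1)) * δ := by
    intro δ hδ
    obtain ⟨η, hη0, hη⟩ := Metric.continuous_iff.mp hcont z δ hδ
    set r := min δ η with hrdef
    have hr : 0 < r := lt_min hδ hη0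
    have hfin : ({z, y} : Set X).Finite := (Set.finite_singleton y).insert z
    have hinf : (Metric.ball z r \ {z, y}).Infinite := (hacc r hr).diff hfin
    set q : ℕ → X := fun n => (Set.Infinite.natEmbedding _ hinf n).1 with hqdef
    have hqinj : Function.Injective q :=
      Subtype.coe_injective.comp (Set.Infinite.natEmbedding _ hinf).injective
    have hqmem : ∀ n, q n ∈ Metric.ball z r \ {z, y} := fun n => (Set.Infinite.natEmbedding _ hinf n).2
    have hqz : ∀ n, q n ≠ z := fun n => by have := (hqmem n).2; simp at this; exact this.1
    have hqy : ∀ n, q n ≠ y := fun n => by have := (hqmem n).2; simp at this; exact this.2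
    have hqd : ∀ n, dist (q n) z < r := fun n => Metric.mem_ball.mp (hqmem n).1
    have hqδ : ∀ n, dist (q n) z < δ := fun n => lt_of_lt_of_le (hqd n) (min_le_left _ _)
    have hqT : ∀ n, dist (T (q n)) (T z) < δ := fun n =>
      hη _ (lt_of_lt_of_le (hqd n) (min_le_right _ _))
    set x : Fin (m+3) → X := fun i =>
      if i.val = 0 then z else if i.val = 1 then y else q (i.val - 2) with hxdef
    have hx0 : x 0 = z := by simp [hxdef]
    have hx1 : x 1 = y := by simp [hxdef]
    have hx2 : x 2 = q 0 := by simp only [hxdef, Fin.val_two]; simp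
    have hxinj : Function.Injective x := by
      intro i j h
      simp only [hxdef] at h
      split_ifs at h with h1 h2 h2 h3 h4 h4 h5 h5 <;>
        first
        | (apply Fin.ext; omega)
        | exact absurd h.symm hyz
        | exact absurd h hyz
        | exact absurd h.symm (hqz _)
        | exact absurd h (hqz _)
        | exact absurd h.symm (hqy _)
        | exact absurd h (hqy _)
        | (apply Fin.ext; have := hqinj h; omega)
    have hTx := hT x hxinj
    have hne01 : (0 : Fin (m+3)) ≠ 1 := by
      intro h; exact absurd (congrArg Fin.val h) (by simp)
    have e01 : (0 : Fin (m+3)) + 1 = 1 := by simp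
    have e12 : (1 : Fin (m+3)) + 1 = 2 := by
      apply Fin.ext
      simp [Fin.val_add, Fin.val_one, Fin.val_two]
    have hperlb : dist (T z) (T y) + dist (T y) (T (q 0)) ≤ perim (T ∘ x) := by
      have hsub : ∑ i ∈ ({0,1} : Finset (Fin (m+3))), dist ((T∘x) i) ((T∘x) (i+1)) ≤
          ∑ i : Fin (m+3), dist ((T∘x) i) ((T∘x) (i+1)) :=
        Finset.sum_le_sum_of_subset_of_nonneg (Finset.subset_univ _) (fun i _ _ => dist_nonneg)
      rw [Finset.sum_pair hne01] at hsub
      simpa [perim, Function.comp, e01, e12, hx0, hx1, hx2] using hsub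
    have hcard : (Finset.univ \ ({0,1} : Finset (Fin (m+3)))).card = m + 1 := by
      rw [Finset.card_sdiff_of_subset (Finset.subset_univ _), Finset.card_univ, Fintype.card_fin,
        Finset.card_pair hne01]
      omega
    have hSsplit : ∑ i : Fin (m+3), dist (x i) (T (x i)) =
        (∑ i ∈ Finset.univ \ ({0,1} : Finset (Fin (m+3))), dist (x i) (T (x i)))
          + (dist z (T z) + dist y (T y)) := by
      rw [← Finset.sum_sdiff (Finset.subset_univ ({0,1} : Finset (Fin (m+3)))),
        Finset.sum_pair hne01, hx0, hx1]
    have hrest : ∑ i ∈ Finset.univ \ ({0,1} : Finset (Fin (m+3))), dist (x i) (T (x i)) ≤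
        ((m:ℝ)+1) * (dist z (T z) + 2*δ) := by
      have hb : ∀ i ∈ Finset.univ \ ({0,1} : Finset (Fin (m+3))),
          dist (x i) (T (x i)) ≤ dist z (T z) + 2*δ := by
        intro i hi
        simp only [Finset.mem_sdiff, Finset.mem_insert, Finset.mem_singleton, not_or] at hi
        have hi0 : i.val ≠ 0 := by
          intro h; exact hi.2.1 (Fin.ext (by simpa using h))
        have hi1 : i.val ≠ 1 := by
          intro h; exact hi.2.2 (Fin.ext (by simpa using h))
        have hxi : x i = q (i.val - 2) := by simp [hxdef, hi0, hi1, hi.2.1]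
        rw [hxi]
        have h4 := dist_triangle4 (q (i.val - 2)) z (T z) (T (x i))
        have h5 : dist (T z) (T (q (i.val-2))) < δ := by
          rw [dist_comm]; exact hqT _
        have := hqδ (i.val - 2)
        calc dist (q (i.val-2)) (T (q (i.val-2)))
            ≤ dist (q (i.val-2)) z + dist z (T z) + dist (T z) (T (q (i.val-2))) :=
              dist_triangle4 _ _ _ _
          _ ≤ dist z (T z) + 2*δ := by linarith
      calc ∑ i ∈ Finset.univ \ ({0,1} : Finset (Fin (m+3))), dist (x i) (T (x i))
          ≤ (Finset.univ \ ({0,1} : Finset (Fin (m+3)))).card • (dist z (T z) + 2*δ) :=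
            Finset.sum_le_card_nsmul _ _ _ hb
        _ = ((m:ℝ)+1) * (dist z (T z) + 2*δ) := by
            rw [hcard, nsmul_eq_mul]; push_cast; ring
    have htri : dist (T z) (T y) ≤ dist (T y) (T (q 0)) + δ := by
      have h1 := dist_triangle (T y) (T (q 0)) (T z)
      have h2 : dist (T (q 0)) (T z) < δ := hqT 0
      rw [dist_comm]
      linarith
    have hμS := mul_le_mul_of_nonneg_left hrest hμ0
    rw [hSsplit] at hTx
    nlinarith [hTx, hperlb, htri, hμS, hδ.le, hμ0]
  -- conclude by letting δ → 0
  have hC : (0:ℝ) < 1 + 2*μ*((m:ℝ)+1) := by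
    have h1 : (0:ℝ) ≤ 2*μ*((m:ℝ)+1) :=
      mul_nonneg (by linarith) (by positivity)
    linarith
  apply le_of_forall_pos_le_add
  intro ε hε
  have hkey' := hkey (ε / (1 + 2*μ*((m:ℝ)+1))) (div_pos hε hC)
  rw [mul_div_cancel₀ _ (ne_of_gt hC)] at hkey'
  push_cast at hkey' ⊢
  linarith
end

section
/- Every perimetric contraction on k-polygons with coefficient λ ∈ [0, 1/(k+1)) is a Kannan-type perimetric contraction on k-polygons with coefficient μ = 2λ/(1−λ) ∈ [0, 2/k). -/
theorem stmt13 {X : Type*} [MetricSpace X] {k : ℕ} [NeZero k] (hk : 3 ≤ k)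
    (hX : ∃ f : Fin k → X, Function.Injective f)
    (T : X → X) (lam : ℝ) (hlam0 : 0 ≤ lam) (hlam1 : lam < 1 / ((k : ℝ) + 1))
    (hT : ∀ x : Fin k → X, Function.Injective x → perim (T ∘ x) ≤ lam * perim x) :
    0 ≤ 2 * lam / (1 - lam) ∧ 2 * lam / (1 - lam) < 2 / (k : ℝ) ∧
      ∀ x : Fin k → X, Function.Injective x →
        perim (T ∘ x) ≤ (2 * lam / (1 - lam)) * ∑ i : Fin k, dist (x i) (T (x i)) := by
  have hkR : (3 : ℝ) ≤ (k : ℝ) := by exact_mod_cast hk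
  have hkpos : (0 : ℝ) < k := by linarith
  have hkp1 : (0 : ℝ) < (k : ℝ) + 1 := by linarith
  have hlam1' : lam * ((k : ℝ) + 1) < 1 := (lt_div_iff₀ hkp1).mp hlam1
  have hlamlt1 : lam < 1 := by nlinarith
  have h1lam : 0 < 1 - lam := by linarith
  refine ⟨div_nonneg (by linarith) (le_of_lt h1lam), ?_, ?_⟩
  · rw [div_lt_div_iff₀ h1lam hkpos]
    nlinarith
  · intro x hx
    set S : ℝ := ∑ i : Fin k, dist (x i) (T (x i)) with hS
    have hshift : ∑ i : Fin k, dist (T (x (i + 1))) (x (i + 1)) = S := by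
      exact Fintype.sum_equiv (Equiv.addRight (1 : Fin k))
        (fun i => dist (T (x (i + 1))) (x (i + 1)))
        (fun j => dist (x j) (T (x j))) (fun i => dist_comm _ _)
    have key : perim x ≤ 2 * S + perim (T ∘ x) := by
      have : perim x ≤ ∑ i : Fin k, (dist (x i) (T (x i)) + dist (T (x i)) (T (x (i+1)))
          + dist (T (x (i+1))) (x (i+1))) := by
        apply Finset.sum_le_sum
        intro i _
        calc dist (x i) (x (i+1)) ≤ dist (x i) (T (x (i+1))) + dist (T (x (i+1))) (x (i+1)) :=
              dist_triangle _ _ _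
          _ ≤ (dist (x i) (T (x i)) + dist (T (x i)) (T (x (i+1)))) + dist (T (x (i+1))) (x (i+1)) := by
              gcongr; exact dist_triangle _ _ _
          _ = _ := by ring
      rw [Finset.sum_add_distrib, Finset.sum_add_distrib, hshift] at this
      have hperimT : perim (T ∘ x) = ∑ i : Fin k, dist (T (x i)) (T (x (i+1))) := rfl
      rw [hperimT]
      linarith
    have h2 : perim (T ∘ x) ≤ lam * perim x := hT x hx
    have h3 : (1 - lam) * perim (T ∘ x) ≤ 2 * lam * S := by nlinarith
    rw [div_mul_eq_mul_div, le_div_iff₀ h1lam]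
    linarith [h3]
end

section
/- Let (X,d) be a complete metric space with |X| ≥ 3 and T : X → X a Kannan-type perimetric contraction on k-polygons (3 ≤ k ≤ |X|, μ ∈ [0, 2/k)). If T has no periodic points of prime period i for i = 2,...,k−1, then T has a fixed point. -/
open Fin.NatCast Fin.CommRing

lemma perim_nonneg {X : Type*} [MetricSpace X] {k : ℕ} [NeZero k] (v : Fin k → X) :
    0 ≤ perim v := Finset.sum_nonneg fun _ _ => dist_nonneg

lemma edge_le {X : Type*} [MetricSpace X] {k : ℕ} [NeZero k] (v : Fin k → X) (j : Fin k) :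
    2 * dist (v j) (v (j + 1)) ≤ perim v := by
  have hk : 0 < k := Nat.pos_of_ne_zero (NeZero.ne k)
  have hcast : ((k - 1 : ℕ) : Fin k) = -1 := by
    rw [Nat.cast_sub hk, Fin.natCast_self, Nat.cast_one, zero_sub]
  have h1 : perim v = ∑ t ∈ Finset.range k,
      dist (v (j + 1 + (t : Fin k))) (v (j + 1 + (t : Fin k) + 1)) := by
    rw [← Fin.sum_univ_eq_sum_range
      (fun t : ℕ => dist (v (j + 1 + (t : Fin k))) (v (j + 1 + (t : Fin k) + 1))) k]
    rw [perim]
    refine Fintype.sum_equiv (Equiv.subRight (j + 1)) _ _ (fun t => ?_)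
    simp [Fin.cast_val_eq_self, Equiv.subRight, add_sub_cancel]
  have h2 : dist (v (j + 1)) (v j) ≤
      ∑ t ∈ Finset.range (k - 1), dist (v (j + 1 + (t : Fin k))) (v (j + 1 + (t : Fin k) + 1)) := by
    have := dist_le_range_sum_dist (fun t : ℕ => v (j + 1 + (t : Fin k))) (k - 1)
    simpa [hcast, ← add_assoc] using this
  have h3 : perim v = (∑ t ∈ Finset.range (k - 1),
      dist (v (j + 1 + (t : Fin k))) (v (j + 1 + (t : Fin k) + 1))) + dist (v j) (v (j + 1)) := by
    rw [h1, show Finset.range k = insert (k-1) (Finset.range (k-1)) by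
      rw [← Finset.range_add_one]; congr 1; omega]
    rw [Finset.sum_insert (by simp)]
    rw [hcast]
    have e1 : j + 1 + (-1 : Fin k) = j := by ring
    rw [e1]
    exact add_comm _ _
  rw [h3]
  rw [dist_comm (v (j+1)) (v j)] at h2
  linarith

lemma geom_aux {C : ℝ} (hC0 : 0 ≤ C) {s : ℕ → ℝ}
    (hdec : ∀ n, s (n+1) ≤ C * s n) : ∀ n, s n ≤ C^n * s 0 := by
  intro n
  induction n with
  | zero => simp
  | succ n ih =>
    calc s (n+1) ≤ C * s n := hdec n
    _ ≤ C * (C^n * s 0) := by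
        exact mul_le_mul_of_nonneg_left ih hC0
    _ = C^(n+1) * s 0 := by ring

lemma lemA {X : Type*} [MetricSpace X] {k : ℕ} [NeZero k] (hk : 3 ≤ k)
    (T : X → X) (μ : ℝ) (hμ0 : 0 ≤ μ) (hμ1 : μ < 2 / (k : ℝ))
    (hT : ∀ x : Fin k → X, Function.Injective x →
      perim (T ∘ x) ≤ μ * ∑ i : Fin k, dist (x i) (T (x i)))
    (y : X) (hinj : Function.Injective fun i : Fin k => T^[(i : ℕ)] y) :
    (2 - μ * ((k:ℝ) - 1)) * dist (T y) (T (T y)) ≤ μ * dist y (T y) := by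
  have hk1 : (3:ℝ) ≤ (k:ℝ) := by exact_mod_cast hk
  have hkpos : (0:ℝ) < k := by linarith
  set x : Fin k → X := fun i => T^[(i:ℕ)] y with hx
  have hP := hT x hinj
  set P := perim (T ∘ x) with hPdef
  have hP0 : 0 ≤ P := perim_nonneg _
  have hwj : ∀ j : Fin k, (T ∘ x) j = T^[(j:ℕ)+1] y := by
    intro j
    simp [hx, Function.comp, Function.iterate_succ_apply']
  have hedge : ∀ i : ℕ, 1 ≤ i → i < k → 2 * dist (T^[i] y) (T^[i+1] y) ≤ P := by
    intro i h1 h2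
    have hj := edge_le (T ∘ x) ((i-1 : ℕ) : Fin k)
    have e1 : (T ∘ x) ((i-1 : ℕ) : Fin k) = T^[i] y := by
      rw [hwj, Fin.val_natCast, Nat.mod_eq_of_lt (by omega : i - 1 < k),
        show i - 1 + 1 = i by omega]
    have e2 : (((i-1 : ℕ) : Fin k) + 1) = ((i : ℕ) : Fin k) := by
      conv_rhs => rw [show i = (i-1) + 1 by omega]
      push_cast
      ring
    have e3 : (T ∘ x) (((i-1:ℕ) : Fin k) + 1) = T^[i+1] y := by
      rw [e2, hwj, Fin.val_natCast, Nat.mod_eq_of_lt h2]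
    rw [e1, e3] at hj
    exact hj
  -- sum bound
  have hsum : ∑ i : Fin k, dist (x i) (T (x i)) ≤ dist y (T y) + ((k:ℝ)-1) * (P/2) := by
    have hsplit : ∑ i : Fin k, dist (x i) (T (x i)) =
        dist (x 0) (T (x 0)) + ∑ i ∈ Finset.univ.erase 0, dist (x i) (T (x i)) :=
      (Finset.add_sum_erase _ _ (Finset.mem_univ 0)).symm
    have hx0 : dist (x 0) (T (x 0)) = dist y (T y) := by simp [hx]
    have hbd : ∑ i ∈ Finset.univ.erase 0, dist (x i) (T (x i)) ≤ ((k:ℝ)-1) * (P/2) := by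
      have hcard : (Finset.univ.erase (0 : Fin k)).card = k - 1 := by
        rw [Finset.card_erase_of_mem (Finset.mem_univ _), Finset.card_univ, Fintype.card_fin]
      have := Finset.sum_le_card_nsmul (Finset.univ.erase (0 : Fin k))
        (fun i => dist (x i) (T (x i))) (P/2) ?_
      · rw [hcard] at this
        have hc : ((k-1 : ℕ) : ℝ) = (k:ℝ) - 1 := by
          have : 1 ≤ k := by omega
          push_cast [this]
          ring
        calc ∑ i ∈ Finset.univ.erase 0, dist (x i) (T (x i)) ≤ (k-1) • (P/2) := this
        _ = ((k-1 : ℕ) : ℝ) * (P/2) := by rw [nsmul_eq_mul]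
        _ = ((k:ℝ)-1) * (P/2) := by rw [hc]
      · intro i hi
        have hi0 : (i:ℕ) ≠ 0 := by
          intro h
          apply Finset.ne_of_mem_erase hi
          exact Fin.ext (by simpa using h)
        have hdi : dist (x i) (T (x i)) = dist (T^[(i:ℕ)] y) (T^[(i:ℕ)+1] y) := by
          simp [hx, Function.iterate_succ_apply']
        have := hedge (i:ℕ) (by omega) i.isLt
        show dist (x i) (T (x i)) ≤ P / 2
        rw [hdi]
        linarith
    rw [hsplit, hx0]
    linarith
  -- combine
  have hub : P ≤ μ * (dist y (T y) + ((k:ℝ)-1) * (P/2)) :=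
    le_trans hP (mul_le_mul_of_nonneg_left hsum hμ0)
  have hs1 : 2 * dist (T y) (T (T y)) ≤ P := by
    have := hedge 1 le_rfl (by omega)
    simpa using this
  have hden : 0 ≤ 2 - μ * ((k:ℝ) - 1) := by
    have h1 : μ * (k:ℝ) < 2 := by
      have := (lt_div_iff₀ hkpos).mp hμ1
      linarith
    nlinarith
  nlinarith [mul_le_mul_of_nonneg_left hs1 hden]

theorem stmt14 {X : Type*} [MetricSpace X] [CompleteSpace X] {k : ℕ} [NeZero k] (hk : 3 ≤ k)
    (hX : ∃ f : Fin k → X, Function.Injective f)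
    (T : X → X) (μ : ℝ) (hμ0 : 0 ≤ μ) (hμ1 : μ < 2 / (k : ℝ))
    (hT : ∀ x : Fin k → X, Function.Injective x →
      perim (T ∘ x) ≤ μ * ∑ i : Fin k, dist (x i) (T (x i)))
    (hper : ∀ p, 2 ≤ p → p < k → ∀ x : X,
      ¬(T^[p] x = x ∧ ∀ i, 1 ≤ i → i < p → T^[i] x ≠ x)) :
    ∃ w : X, T w = w := by
  classical
  by_contra hfix
  push_neg at hfix
  have hk1 : (3:ℝ) ≤ (k:ℝ) := by exact_mod_cast hk
  have hkpos : (0:ℝ) < k := by linarith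
  have hμk : μ * (k:ℝ) < 2 := by
    have := (lt_div_iff₀ hkpos).mp hμ1
    linarith
  have hden : 0 < 2 - μ * ((k:ℝ) - 1) := by nlinarith
  set C := μ / (2 - μ * ((k:ℝ) - 1)) with hC
  have hC0 : 0 ≤ C := div_nonneg hμ0 hden.le
  have hC1 : C < 1 := by
    rw [hC, div_lt_one hden]
    nlinarith
  have hstep : ∀ y : X, (Function.Injective fun i : Fin k => T^[(i : ℕ)] y) →
      dist (T y) (T (T y)) ≤ C * dist y (T y) := by
    intro y hinj
    have h := lemA hk T μ hμ0 hμ1 hT y hinj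
    rw [hC, div_mul_eq_mul_div, le_div_iff₀ hden]
    linarith
  -- no periodic points
  have hnop : ∀ (z : X) (p : ℕ), 0 < p → T^[p] z ≠ z := by
    intro z p hp hzp
    have hex : ∃ m, 0 < m ∧ T^[m] z = z := ⟨p, hp, hzp⟩
    set m := Nat.find hex with hm
    obtain ⟨hm0, hmz⟩ : 0 < m ∧ T^[m] z = z := Nat.find_spec hex
    have hmin : ∀ i, 0 < i → i < m → T^[i] z ≠ z := by
      intro i hi0 him hiz
      exact Nat.find_min hex him ⟨hi0, hiz⟩
    rcases Nat.lt_or_ge m k with hmk | hmk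
    · -- m < k : use hfix / hper
      rcases Nat.lt_or_ge 1 m with h2 | h2
      · exact hper m h2 hmk z ⟨hmz, fun i h1 hi => hmin i (by omega) hi⟩
      · have hm1 : m = 1 := by omega
        exact hfix z (by rw [hm1] at hmz; simpa using hmz)
    · -- m ≥ k : geometric contradiction
      have hz2 : ∀ t, T^[m*t] z = z := by
        intro t
        induction t with
        | zero => simp
        | succ t ih =>
          rw [Nat.mul_succ, Function.iterate_add_apply, hmz]; exact ih
      have key : ∀ a b : ℕ, a < b → b - a < m → T^[a] z ≠ T^[b] z := by
        intro a b hab hbm heq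
        have hma : a ≤ m * (a+1) := by
          calc a ≤ a + 1 := by omega
          _ ≤ m * (a+1) := Nat.le_mul_of_pos_left _ hm0
        set c := m * (a+1) - a with hc'
        have h1 : T^[c] (T^[a] z) = z := by
          rw [← Function.iterate_add_apply, show c + a = m*(a+1) by omega, hz2]
        have h2 : T^[c] (T^[b] z) = T^[b-a] z := by
          rw [← Function.iterate_add_apply, show c + b = (b-a) + m*(a+1) by omega,
            Function.iterate_add_apply, hz2]
        rw [heq, h2] at h1
        exact hmin (b-a) (by omega) hbm h1
      have hwin : ∀ n : ℕ, Function.Injective fun i : Fin k => T^[(i:ℕ)] (T^[n] z) := by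
        intro n i j hij
        simp only [← Function.iterate_add_apply] at hij
        by_contra hne
        have hvne : (i:ℕ) ≠ (j:ℕ) := fun h => hne (Fin.ext h)
        rcases Nat.lt_or_ge (i:ℕ) (j:ℕ) with h | h
        · exact key ((i:ℕ)+n) ((j:ℕ)+n) (by omega) (by have := j.isLt; omega) hij
        · exact key ((j:ℕ)+n) ((i:ℕ)+n) (by omega) (by have := i.isLt; omega) hij.symm
      have hdec : ∀ n, dist (T^[n+1] z) (T^[n+1+1] z) ≤ C * dist (T^[n] z) (T^[n+1] z) := by
        intro n
        have h := hstep (T^[n] z) (hwin n)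
        have e1 : T (T^[n] z) = T^[n+1] z := (Function.iterate_succ_apply' T n z).symm
        rw [e1] at h
        have e2 : T (T^[n+1] z) = T^[n+1+1] z := (Function.iterate_succ_apply' T (n+1) z).symm
        rw [e2] at h
        exact h
      have hgeo := geom_aux hC0 (s := fun n => dist (T^[n] z) (T^[n+1] z)) hdec
      have hsm : dist (T^[m] z) (T^[m+1] z) = dist z (T z) := by
        rw [Function.iterate_succ_apply' T m z, hmz]
      have h1 := hgeo m
      simp only [hsm] at h1
      have hs0 : 0 < dist z (T z) := by
        rw [dist_pos]
        intro h
        exact hfix z h.symm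
      have hCm : C^m < 1 := pow_lt_one₀ hC0 hC1 (by omega)
      simp only [Function.iterate_zero, id_eq, zero_add, Function.iterate_one] at h1
      nlinarith [mul_lt_mul_of_pos_right hCm hs0]
  -- orbit
  obtain ⟨f, hf⟩ := hX
  set u : ℕ → X := fun n => T^[n] (f 0) with hu
  have huinj : Function.Injective u := by
    intro a b hab
    by_contra hne
    rcases Nat.lt_or_ge a b with h | h
    · have : T^[b-a] (T^[a] (f 0)) = T^[a] (f 0) := by
        rw [← Function.iterate_add_apply, show b - a + a = b by omega]
        exact hab.symm
      exact hnop _ (b-a) (by omega) this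
    · have h' : b < a := by omega
      have : T^[a-b] (T^[b] (f 0)) = T^[b] (f 0) := by
        rw [← Function.iterate_add_apply, show a - b + b = a by omega]
        exact hab
      exact hnop _ (a-b) (by omega) this
  have hTu : ∀ n, T (u n) = u (n+1) := by
    intro n
    simp [hu, Function.iterate_succ_apply']
  have hwinu : ∀ n, Function.Injective fun i : Fin k => T^[(i:ℕ)] (u n) := by
    intro n i j hij
    simp only [hu, ← Function.iterate_add_apply] at hij
    have := huinj hij
    exact Fin.ext (by omega)
  have hdec : ∀ n, dist (u (n+1)) (u (n+1+1)) ≤ C * dist (u n) (u (n+1)) := by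
    intro n
    have h := hstep (u n) (hwinu n)
    rw [hTu n] at h
    rw [hTu (n+1)] at h
    exact h
  have hgeo := geom_aux hC0 (s := fun n => dist (u n) (u (n+1))) hdec
  have hcauchy : CauchySeq u := by
    apply cauchySeq_of_le_geometric C (dist (u 0) (u 1)) hC1
    intro n
    have := hgeo n
    simpa [mul_comm] using this
  obtain ⟨w, hw⟩ := cauchySeq_tendsto_of_complete hcauchy
  obtain ⟨N₀, hN₀⟩ : ∃ N₀, ∀ n, N₀ ≤ n → u n ≠ w := by
    by_cases hwe : ∃ m, u m = w
    · obtain ⟨m, hm⟩ := hwe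
      exact ⟨m+1, fun n hn h => by have := huinj (h.trans hm.symm); omega⟩
    · push_neg at hwe
      exact ⟨0, fun n _ => hwe n⟩
  set d0 := dist (u 0) (u 1) with hd0
  have hd00 : 0 ≤ d0 := dist_nonneg
  set D := dist w (T w) with hD
  -- key inequality
  have hkey : ∀ n, N₀ ≤ n → 2 * D ≤
      μ * (D + (k:ℝ) * (C^n * d0)) + dist (u (n+k-1)) w + dist (u (n+1)) w := by
    intro n hn
    set xv : Fin k → X := fun i => if i = (0 : Fin k) then w else u (n + (i:ℕ) - 1) with hxv
    have hval1 : ∀ i : Fin k, i ≠ 0 → 1 ≤ (i:ℕ) := by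
      intro i hi
      by_contra h
      refine hi (Fin.ext ?_)
      have h0 : ((0 : Fin k) : ℕ) = 0 := rfl
      omega
    have hxvinj : Function.Injective xv := by
      intro i j hij
      by_cases hi : i = 0 <;> by_cases hj : j = 0
      · rw [hi, hj]
      · exfalso
        rw [hxv] at hij
        simp only [hi, if_pos rfl, if_neg hj] at hij
        exact hN₀ (n + (j:ℕ) - 1) (by have := hval1 j hj; omega) hij.symm
      · exfalso
        rw [hxv] at hij
        simp only [hj, if_pos rfl, if_neg hi] at hij
        exact hN₀ (n + (i:ℕ) - 1) (by have := hval1 i hi; omega) hij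
      · rw [hxv] at hij
        simp only [if_neg hi, if_neg hj] at hij
        have := huinj hij
        have h1 := hval1 i hi
        have h2 := hval1 j hj
        exact Fin.ext (by omega)
    have hPT := hT xv hxvinj
    -- identify indices
    have hone : ((1:ℕ) : Fin k) = (1 : Fin k) := by push_cast; ring
    have hv1 : xv 1 = u n := by
      have h10 : (1 : Fin k) ≠ 0 := by
        intro h
        have := Fin.val_eq_of_eq h
        rw [Fin.val_one'] at this
        simp at this
        omega
      rw [hxv]
      simp only [if_neg h10]
      congr 1
      rw [Fin.val_one']
      rw [Nat.mod_eq_of_lt (by omega)]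
      omega
    set jl : Fin k := ((k-1 : ℕ) : Fin k) with hjl
    have hjlv : (jl : ℕ) = k - 1 := by
      rw [hjl, Fin.val_natCast, Nat.mod_eq_of_lt (by omega)]
    have hjl0 : jl ≠ 0 := by
      intro h
      have := Fin.val_eq_of_eq h
      rw [hjlv] at this
      simp at this
      omega
    have hjl1 : jl + 1 = 0 := by
      rw [hjl]
      have e : ((k - 1 : ℕ) : Fin k) + 1 = (((k-1) + 1 : ℕ) : Fin k) := by push_cast; ring
      rw [e, show (k-1)+1 = k by omega, Fin.natCast_self]
    have hvjl : xv jl = u (n + k - 2) := by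
      rw [hxv]
      simp only [if_neg hjl0]
      congr 1
      rw [hjlv]
      omega
    -- two terms of the perimeter
    have hxw : xv 0 = w := by simp [hxv]
    have hterm0 : dist ((T ∘ xv) 0) ((T ∘ xv) (0+1)) = dist (T w) (u (n+1)) := by
      simp only [Function.comp, zero_add]
      rw [hv1, hTu, hxw]
    have htermjl : dist ((T ∘ xv) jl) ((T ∘ xv) (jl+1)) = dist (u (n+k-1)) (T w) := by
      simp only [Function.comp]
      rw [hjl1, hvjl]
      have : T (u (n+k-2)) = u (n+k-1) := by
        rw [hTu]
        congr 1
        omega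
      rw [this, hxw]
    have h0jl : (0 : Fin k) ≠ jl := by
      intro h
      exact hjl0 h.symm
    have hpair : dist (T w) (u (n+1)) + dist (u (n+k-1)) (T w) ≤ perim (T ∘ xv) := by
      rw [← hterm0, ← htermjl]
      rw [perim]
      have hsub : ({0, jl} : Finset (Fin k)) ⊆ Finset.univ := Finset.subset_univ _
      calc dist ((T ∘ xv) 0) ((T ∘ xv) (0+1)) + dist ((T ∘ xv) jl) ((T ∘ xv) (jl+1))
          = ∑ i ∈ ({0, jl} : Finset (Fin k)), dist ((T ∘ xv) i) ((T ∘ xv) (i+1)) := by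
            rw [Finset.sum_pair h0jl]
      _ ≤ ∑ i : Fin k, dist ((T ∘ xv) i) ((T ∘ xv) (i+1)) :=
            Finset.sum_le_sum_of_subset_of_nonneg hsub (fun _ _ _ => dist_nonneg)
    -- RHS bound
    have hrhs : ∑ i : Fin k, dist (xv i) (T (xv i)) ≤ D + (k:ℝ) * (C^n * d0) := by
      have hsplit : ∑ i : Fin k, dist (xv i) (T (xv i)) =
          dist (xv 0) (T (xv 0)) + ∑ i ∈ Finset.univ.erase 0, dist (xv i) (T (xv i)) :=
        (Finset.add_sum_erase _ _ (Finset.mem_univ 0)).symm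
      have hxv0 : dist (xv 0) (T (xv 0)) = D := by
        rw [hxv]; simp [hD]
      have hbd : ∑ i ∈ Finset.univ.erase 0, dist (xv i) (T (xv i)) ≤
          ((k:ℝ)) * (C^n * d0) := by
        have hterm : ∀ i ∈ Finset.univ.erase (0 : Fin k),
            dist (xv i) (T (xv i)) ≤ C^n * d0 := by
          intro i hi
          have hi0 : i ≠ 0 := Finset.ne_of_mem_erase hi
          have h1 := hval1 i hi0
          have hxvi : xv i = u (n + (i:ℕ) - 1) := by
            rw [hxv]; simp [hi0]
          rw [hxvi, hTu]
          calc dist (u (n + (i:ℕ) - 1)) (u (n + (i:ℕ) - 1 + 1)) ≤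
              C^(n + (i:ℕ) - 1) * d0 := hgeo _
          _ ≤ C^n * d0 := by
              apply mul_le_mul_of_nonneg_right _ hd00
              exact pow_le_pow_of_le_one hC0 hC1.le (by omega)
        have := Finset.sum_le_card_nsmul _ _ _ hterm
        have hcard : (Finset.univ.erase (0 : Fin k)).card = k - 1 := by
          rw [Finset.card_erase_of_mem (Finset.mem_univ _), Finset.card_univ, Fintype.card_fin]
        rw [hcard] at this
        calc ∑ i ∈ Finset.univ.erase 0, dist (xv i) (T (xv i)) ≤ (k-1) • (C^n * d0) := this
        _ = ((k-1 : ℕ) : ℝ) * (C^n * d0) := by rw [nsmul_eq_mul]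
        _ ≤ (k:ℝ) * (C^n * d0) := by
            apply mul_le_mul_of_nonneg_right _ (by positivity)
            exact_mod_cast Nat.sub_le k 1
      rw [hsplit, hxv0]
      linarith
    have hfin : dist (T w) (u (n+1)) + dist (u (n+k-1)) (T w) ≤ μ * (D + (k:ℝ) * (C^n * d0)) := by
      calc dist (T w) (u (n+1)) + dist (u (n+k-1)) (T w) ≤ perim (T ∘ xv) := hpair
      _ ≤ μ * ∑ i : Fin k, dist (xv i) (T (xv i)) := hPT
      _ ≤ μ * (D + (k:ℝ) * (C^n * d0)) := mul_le_mul_of_nonneg_left hrhs hμ0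
    have ht1 : D ≤ dist (u (n+1)) w + dist (T w) (u (n+1)) := by
      rw [hD]
      calc dist w (T w) ≤ dist w (u (n+1)) + dist (u (n+1)) (T w) := dist_triangle _ _ _
      _ = dist (u (n+1)) w + dist (T w) (u (n+1)) := by
            rw [dist_comm (u (n+1)) (T w), dist_comm w (u (n+1))]
    have ht2 : D ≤ dist (u (n+k-1)) w + dist (u (n+k-1)) (T w) := by
      rw [hD]
      calc dist w (T w) ≤ dist w (u (n+k-1)) + dist (u (n+k-1)) (T w) := dist_triangle _ _ _
      _ = dist (u (n+k-1)) w + dist (u (n+k-1)) (T w) := by rw [dist_comm w]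
    linarith
  -- limit
  have hlim : Filter.Tendsto
      (fun n => μ * (D + (k:ℝ) * (C^n * d0)) + dist (u (n+k-1)) w + dist (u (n+1)) w)
      Filter.atTop (nhds (μ * D)) := by
    have hCn : Filter.Tendsto (fun n : ℕ => C^n) Filter.atTop (nhds 0) :=
      tendsto_pow_atTop_nhds_zero_of_lt_one hC0 hC1
    have h1 : Filter.Tendsto (fun n => dist (u (n+k-1)) w) Filter.atTop (nhds 0) := by
      have h : Filter.Tendsto (fun n => dist (u (n+(k-1))) w) Filter.atTop (nhds (dist w w)) :=
        Filter.Tendsto.dist (hw.comp (Filter.tendsto_add_atTop_nat (k-1))) tendsto_const_nhds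
      rw [dist_self] at h
      exact Filter.Tendsto.congr (fun n => by congr 2; omega) h
    have h2 : Filter.Tendsto (fun n => dist (u (n+1)) w) Filter.atTop (nhds 0) := by
      have h : Filter.Tendsto (fun n => dist (u (n+1)) w) Filter.atTop (nhds (dist w w)) :=
        Filter.Tendsto.dist (hw.comp (Filter.tendsto_add_atTop_nat 1)) tendsto_const_nhds
      rw [dist_self] at h
      exact h
    have h3 : Filter.Tendsto (fun n => μ * (D + (k:ℝ) * (C^n * d0))) Filter.atTop
        (nhds (μ * D)) := by
      have : Filter.Tendsto (fun n : ℕ => D + (k:ℝ) * (C^n * d0)) Filter.atTop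
          (nhds (D + (k:ℝ) * (0 * d0))) :=
        tendsto_const_nhds.add ((Filter.Tendsto.const_mul _ (hCn.mul_const d0)))
      have h4 := this.const_mul μ
      simpa using h4
    have := (h3.add h1).add h2
    simpa using this
  have h2D : 2 * D ≤ μ * D := by
    apply ge_of_tendsto hlim
    filter_upwards [Filter.eventually_ge_atTop N₀] with n hn
    exact hkey n hn
  have hD0 : 0 ≤ D := dist_nonneg
  have hDz : D = 0 := by nlinarith
  exact hfix w (by rw [hD] at hDz; exact (dist_eq_zero.mp hDz).symm)
end

section
/- A Kannan-type perimetric contraction on k-polygons has at most k−1 fixed points. -/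
theorem stmt15 {X : Type*} [MetricSpace X] {k : ℕ} [NeZero k] (hk : 3 ≤ k)
    (hX : ∃ f : Fin k → X, Function.Injective f)
    (T : X → X) (μ : ℝ) (hμ0 : 0 ≤ μ) (hμ1 : μ < 2 / (k : ℝ))
    (hT : ∀ x : Fin k → X, Function.Injective x →
      perim (T ∘ x) ≤ μ * ∑ i : Fin k, dist (x i) (T (x i))) :
    ∀ s : Finset X, (∀ x ∈ s, T x = x) → s.card ≤ k - 1 := by
  intro s hs
  by_contra hcard
  push_neg at hcard
  have hks : k ≤ s.card := by omega
  let e := s.equivFin.symm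
  set x : Fin k → X := fun i => (e (Fin.castLE hks i)).val with hxdef
  have hinj : Function.Injective x := by
    intro a b hab
    have := e.injective (Subtype.ext hab)
    exact Fin.castLE_injective hks this
  have hmem : ∀ i, x i ∈ s := fun i => (e (Fin.castLE hks i)).2
  have hfix : ∀ i, T (x i) = x i := fun i => hs _ (hmem i)
  have h := hT x hinj
  have h0 : (∑ i : Fin k, dist (x i) (T (x i))) = 0 := by
    apply Finset.sum_eq_zero
    intro i _
    rw [hfix i, dist_self]
  rw [h0, mul_zero] at h
  have hperim : perim (T ∘ x) = perim x := by
    unfold perim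
    apply Finset.sum_congr rfl
    intro i _
    simp [hfix]
  rw [hperim] at h
  have hzero : ∀ i ∈ (Finset.univ : Finset (Fin k)), dist (x i) (x (i + 1)) = 0 := by
    have := (Finset.sum_eq_zero_iff_of_nonneg (fun i _ => dist_nonneg)).mp
      (le_antisymm h (Finset.sum_nonneg fun i _ => dist_nonneg))
    exact this
  have h01 : x 0 = x (0 + 1) := dist_eq_zero.mp (hzero 0 (Finset.mem_univ _))
  have : (0 : Fin k) = 0 + 1 := hinj h01
  have : ((0 : Fin k) : ℕ) = ((0 + 1 : Fin k) : ℕ) := congrArg _ this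
  simp [Fin.val_add] at this
  omega
end

section
/- Let T be a Kannan-type perimetric contraction on k-polygons on a complete metric space, with fixed point w that is the limit of an iteration sequence (x_i) with x_{i} = T x_{i-1} and w ≠ x_i for all i. Then w is the unique fixed point of T. -/
theorem stmt16 {X : Type*} [MetricSpace X] [CompleteSpace X] {k : ℕ} [NeZero k] (hk : 3 ≤ k)
    (hX : ∃ f : Fin k → X, Function.Injective f)
    (T : X → X) (μ : ℝ) (hμ0 : 0 ≤ μ) (hμ1 : μ < 2 / (k : ℝ))
    (hT : ∀ x : Fin k → X, Function.Injective x →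
      perim (T ∘ x) ≤ μ * ∑ i : Fin k, dist (x i) (T (x i)))
    (x : ℕ → X) (hx : ∀ n, x (n + 1) = T (x n)) (w : X)
    (hlim : Filter.Tendsto x Filter.atTop (nhds w)) (hfix : T w = w)
    (hne : ∀ i, w ≠ x i) :
    ∀ z : X, T z = z → z = w := by
  -- shift lemma
  have shift : ∀ t a b, x a = x b → x (a + t) = x (b + t) := by
    intro t
    induction t with
    | zero => intro a b h; simpa using h
    | succ t ih =>
      intro a b h
      have h2 := ih a b h
      have e1 : a + (t + 1) = (a + t) + 1 := by omega
      have e2 : b + (t + 1) = (b + t) + 1 := by omega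
      rw [e1, e2, hx, hx, h2]
  have key : ∀ n m, n < m → x n ≠ x m := by
    intro n m hlt heq
    set p := m - n with hp
    have hp1 : 1 ≤ p := by omega
    have hnp : n + p = m := by omega
    have step : ∀ j, x (n + j * p) = x n := by
      intro j
      induction j with
      | zero => simp
      | succ j ih =>
        have e : n + (j + 1) * p = (n + j * p) + p := by ring
        have h1 : x ((n + j * p) + p) = x (n + p) := shift p _ _ ih
        rw [e, h1, hnp]; exact heq.symm
    have hmono : Filter.Tendsto (fun j : ℕ => n + j * p) Filter.atTop Filter.atTop := by
      apply Filter.tendsto_atTop_mono (f := fun j : ℕ => j)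
      · intro j
        calc j ≤ j * p := Nat.le_mul_of_pos_right j (by omega)
          _ ≤ n + j * p := Nat.le_add_left _ _
      · exact Filter.tendsto_id
    have htend : Filter.Tendsto (fun j : ℕ => x (n + j * p)) Filter.atTop (nhds w) :=
      hlim.comp hmono
    have hconst : Filter.Tendsto (fun _ : ℕ => x n) Filter.atTop (nhds w) := by
      simpa [step] using htend
    exact hne n (tendsto_nhds_unique tendsto_const_nhds hconst).symm
  have hxinj : Function.Injective x := by
    intro n m h
    rcases lt_trichotomy n m with h' | h' | h'
    · exact absurd h (key n m h')
    · exact h'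
    · exact absurd h.symm (key m n h')
  intro z hz
  by_contra hzw
  have hxz : ∀ m, x m ≠ z := by
    intro m hm
    have : x (m + 1) = x m := by rw [hx, hm, hz]
    have := hxinj this
    omega
  set d : ℝ := dist z w with hdd
  have hd : 0 < d := dist_pos.mpr hzw
  have hk0 : (0 : ℝ) < (k : ℝ) := by positivity
  set ε : ℝ := d / (4 * (k : ℝ) * (μ + 1)) with hεdef
  have hε : 0 < ε := by
    apply div_pos hd
    positivity
  obtain ⟨N, hN⟩ := (Metric.tendsto_atTop.mp hlim) ε hε
  set f : Fin k → X := fun i => if i.val = 0 then w else if i.val = 1 then z else x (N + i.val)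
    with hfdef
  have hfval : ∀ i : Fin k, f i = w ∨ f i = z ∨ f i = x (N + i.val) := by
    intro i
    by_cases h0 : i.val = 0
    · left; simp only [hfdef, h0, ↓reduceIte]
    · by_cases h1 : i.val = 1
      · right; left; simp only [hfdef, h0, h1, one_ne_zero, ↓reduceIte]
      · right; right; simp only [hfdef, h0, h1, ↓reduceIte]
  have hfinj : Function.Injective f := by
    intro i j hij
    apply Fin.ext
    by_cases hi0 : i.val = 0 <;> by_cases hj0 : j.val = 0 <;>
      by_cases hi1 : i.val = 1 <;> by_cases hj1 : j.val = 1 <;>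
      simp only [hfdef, hi0, hj0, hi1, hj1, if_true, if_false,
        reduceIte] at hij ⊢ <;>
      first
      | omega
      | (exact absurd hij (hne _))
      | (exact absurd hij (hxz _))
      | (exact absurd hij.symm (hne _))
      | (exact absurd hij.symm (hxz _))
      | (exact absurd hij hzw)
      | (exact absurd hij.symm hzw)
      | (have := hxinj hij; omega)
  set i0 : Fin k := ⟨0, by omega⟩ with hi0def
  set i1 : Fin k := ⟨1, by omega⟩ with hi1def
  have h1k : (1 : Fin k).val = 1 := by
    rw [Fin.val_one']
    exact Nat.mod_eq_of_lt (by omega)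
  have hi01 : i0 + 1 = i1 := by
    apply Fin.ext
    rw [Fin.add_def, h1k, hi0def, hi1def]
    show (0 + 1) % k = 1
    exact Nat.mod_eq_of_lt (by omega)
  have hf0 : f i0 = w := by simp [hfdef, hi0def]
  have hf1 : f i1 = z := by simp [hfdef, hi1def]
  have hlow : d ≤ perim (T ∘ f) := by
    have h1 := Finset.single_le_sum
      (f := fun i : Fin k => dist ((T ∘ f) i) ((T ∘ f) (i + 1)))
      (fun i _ => dist_nonneg) (Finset.mem_univ i0)
    rw [hi01] at h1
    have h2 : perim (T ∘ f) = ∑ i : Fin k, dist ((T ∘ f) i) ((T ∘ f) (i + 1)) := rfl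
    rw [h2]
    simpa [hf0, hf1, hfix, hz, dist_comm, hdd] using h1
  have hterm : ∀ i : Fin k, dist (f i) (T (f i)) ≤ 2 * ε := by
    intro i
    by_cases h0 : i.val = 0
    · have : f i = w := by simp only [hfdef, h0, ↓reduceIte]
      rw [this, hfix]
      simp; positivity
    · by_cases h1 : i.val = 1
      · have : f i = z := by simp only [hfdef, h0, h1, one_ne_zero, ↓reduceIte]
        rw [this, hz]
        simp; positivity
      · have hfi : f i = x (N + i.val) := by simp only [hfdef, h0, h1, ↓reduceIte]
        rw [hfi, ← hx (N + i.val)]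
        have hA : dist (x (N + i.val)) w < ε := hN _ (Nat.le_add_right _ _)
        have hB : dist (x (N + i.val + 1)) w < ε := hN _ (by omega)
        calc dist (x (N + i.val)) (x (N + i.val + 1))
            ≤ dist (x (N + i.val)) w + dist w (x (N + i.val + 1)) := dist_triangle _ _ _
          _ = dist (x (N + i.val)) w + dist (x (N + i.val + 1)) w := by rw [dist_comm w]
          _ ≤ 2 * ε := by linarith
  have hup : ∑ i : Fin k, dist (f i) (T (f i)) ≤ (k : ℝ) * (2 * ε) := by
    calc ∑ i : Fin k, dist (f i) (T (f i)) ≤ ∑ _i : Fin k, 2 * ε :=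
          Finset.sum_le_sum fun i _ => hterm i
      _ = (k : ℝ) * (2 * ε) := by
          rw [Finset.sum_const, Finset.card_univ, Fintype.card_fin, nsmul_eq_mul]
  have hmain := hT f hfinj
  have hfin : d ≤ μ * ((k : ℝ) * (2 * ε)) :=
    le_trans hlow (le_trans hmain (mul_le_mul_of_nonneg_left hup hμ0))
  have hs : 0 < (k : ℝ) * (2 * ε) := by positivity
  have heq : (k : ℝ) * (2 * ε) * (2 * (μ + 1)) = d := by
    rw [hεdef]; field_simp; ring
  nlinarith [hfin, hs, hμ0, heq]
end

section
/- Let T be a Kannan-type perimetric contraction on k-polygons with coefficient μ ∈ [0, 2/k), and suppose the orbit sequence x_n = T x_{n-1} has every k consecutive elements pairwise distinct. Then with r_n = d(x_n, x_{n+1}), one has r_{n+k-1} ≤ ρ · max{r_n, r_{n+1}, ..., r_{n+k-2}} for all n ≥ 0, where ρ = (k−2)μ/(2−μ) < 1. -/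
lemma chain_le {X : Type*} [MetricSpace X] (x : ℕ → X) (a m : ℕ) :
    dist (x a) (x (a + m)) ≤ ∑ j ∈ Finset.range m, dist (x (a + j)) (x (a + j + 1)) := by
  induction m with
  | zero => simp
  | succ m ih =>
    rw [Finset.sum_range_succ]
    calc dist (x a) (x (a + (m+1)))
        ≤ dist (x a) (x (a+m)) + dist (x (a+m)) (x (a+m+1)) := dist_triangle _ _ _
      _ ≤ _ := by linarith

lemma perim_eq {X : Type*} [MetricSpace X] (m : ℕ) (w : ℕ → X) :
    perim (fun i : Fin (m+1) => w i.val) =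
      (∑ j ∈ Finset.range m, dist (w j) (w (j+1))) + dist (w m) (w 0) := by
  unfold perim
  rw [Fin.sum_univ_castSucc]
  congr 1
  · rw [← Fin.sum_univ_eq_sum_range (fun j => dist (w j) (w (j+1)))]
    apply Finset.sum_congr rfl
    intro i _
    have h1 : ((i.castSucc + 1 : Fin (m+1)) : ℕ) = i.val + 1 :=
      Fin.val_add_one_of_lt (Fin.castSucc_lt_last i)
    simp [h1]
  · have h2 : ((Fin.last m + 1 : Fin (m+1)) : ℕ) = 0 := by
      rw [Fin.last_add_one]; simp
    simp [h2]

theorem stmt17 {X : Type*} [MetricSpace X] {k : ℕ} [NeZero k] (hk : 3 < k)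
    (T : X → X) (μ : ℝ) (hμ0 : 0 ≤ μ) (hμ1 : μ < 2 / (k : ℝ))
    (hT : ∀ x : Fin k → X, Function.Injective x →
      perim (T ∘ x) ≤ μ * ∑ i : Fin k, dist (x i) (T (x i)))
    (x : ℕ → X) (hx : ∀ n, x (n + 1) = T (x n))
    (hdist : ∀ n : ℕ, Function.Injective fun i : Fin k => x (n + i)) :
    ((k : ℝ) - 2) * μ / (2 - μ) < 1 ∧
      ∀ n : ℕ, dist (x (n + k - 1)) (x (n + k)) ≤
        ((k : ℝ) - 2) * μ / (2 - μ) *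
          (Finset.range (k - 1)).sup' (Finset.nonempty_range_iff.mpr (by omega))
            (fun j => dist (x (n + j)) (x (n + j + 1))) := by
  obtain ⟨p, rfl⟩ : ∃ p, k = p + 2 := ⟨k - 2, by omega⟩
  have hp : 2 ≤ p := by omega
  set K : ℝ := ((p + 2 : ℕ) : ℝ) with hK
  have hK4 : (4:ℝ) ≤ K := by rw [hK]; exact_mod_cast (by omega : 4 ≤ p + 2)
  have hKpos : (0:ℝ) < K := by linarith
  have hμk : μ * K < 2 := (lt_div_iff₀ hKpos).mp hμ1
  have hμhalf : μ < 1/2 := by nlinarith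
  have h2μ : (0:ℝ) < 2 - μ := by linarith
  constructor
  · rw [div_lt_one h2μ]
    nlinarith
  · intro n
    -- apply the contraction hypothesis
    have key := hT (fun i : Fin (p+2) => x (n + i.val)) (hdist n)
    have hTy : (T ∘ fun i : Fin (p+2) => x (n + i.val)) =
        fun i : Fin ((p+1)+1) => (fun j => x (n+1+j)) i.val := by
      funext i
      show T (x (n + i.val)) = x (n+1+i.val)
      rw [← hx]
      congr 1
      omega
    rw [hTy, perim_eq (p+1) (fun j => x (n+1+j))] at key
    have hRHS : (∑ i : Fin (p+2), dist ((fun i : Fin (p+2) => x (n + i.val)) i)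
        (T ((fun i : Fin (p+2) => x (n + i.val)) i))) =
        ∑ j ∈ Finset.range (p+2), dist (x (n+j)) (x (n+j+1)) := by
      rw [← Fin.sum_univ_eq_sum_range (fun j => dist (x (n+j)) (x (n+j+1)))]
      apply Finset.sum_congr rfl
      intro i _
      show dist (x (n + i.val)) (T (x (n + i.val))) = _
      rw [← hx]
    rw [hRHS] at key
    -- abbreviations
    set A : ℝ := dist (x n) (x (n+1)) with hA
    set S : ℝ := ∑ j ∈ Finset.range p, dist (x (n+1+j)) (x (n+1+j+1)) with hS
    set R : ℝ := dist (x (n+1+p)) (x (n+1+p+1)) with hR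
    set D : ℝ := dist (x (n+1+p+1)) (x (n+1)) with hD
    have e1 : (∑ j ∈ Finset.range (p+1), dist (x (n+1+j)) (x (n+1+(j+1)))) = S + R := by
      rw [Finset.sum_range_succ]
      rfl
    have e2 : (∑ j ∈ Finset.range (p+2), dist (x (n+j)) (x (n+j+1))) = A + (S + R) := by
      rw [Finset.sum_range_succ', Finset.sum_range_succ]
      have h1 : ∀ j ∈ Finset.range p,
          dist (x (n+(j+1))) (x (n+(j+1)+1)) = dist (x (n+1+j)) (x (n+1+j+1)) := by
        intro j _
        have e : n+(j+1) = n+1+j := by omega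
        rw [e]
      rw [Finset.sum_congr rfl h1]
      have e : n+(p+1) = n+1+p := by omega
      rw [e]
      show S + R + A = A + (S + R)
      ring
    have key2 : (S + R) + D ≤ μ * (A + (S + R)) := by
      have e3 : dist (x (n+1+(p+1))) (x (n+1+0)) = D := rfl
      rw [e1, e3, e2] at key
      exact key
    -- triangle bounds
    have t1 : R ≤ S + D := by
      have h1 := dist_triangle (x (n+1+p)) (x (n+1)) (x (n+1+p+1))
      have h2 : dist (x (n+1)) (x (n+1+p)) ≤ S := chain_le x (n+1) p
      have h3 : dist (x (n+1+p)) (x (n+1)) = dist (x (n+1)) (x (n+1+p)) := dist_comm _ _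
      have h4 : dist (x (n+1)) (x (n+1+p+1)) = D := dist_comm _ _
      rw [h3, h4] at h1
      linarith
    have hS0 : 0 ≤ S := Finset.sum_nonneg fun j _ => dist_nonneg
    have hR0 : 0 ≤ R := dist_nonneg
    have hD0 : 0 ≤ D := dist_nonneg
    have hA0 : 0 ≤ A := dist_nonneg
    -- key algebra: 2(1-μ)R ≤ μA
    have h2R : 2*R ≤ μ * (A + (S + R)) := by linarith
    have hi : S + R ≤ μ * (A + (S + R)) := by linarith
    have hmain : 2*(1-μ)*R ≤ μ*A := by
      have hA1 : (1-μ) * (2*R) ≤ (1-μ) * (μ * (A + (S + R))) :=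
        mul_le_mul_of_nonneg_left h2R (by linarith)
      have hA2 : μ * (S + R) ≤ μ * (μ * (A + (S + R))) :=
        mul_le_mul_of_nonneg_left hi hμ0
      nlinarith [hA1, hA2]
    -- the sup bound
    set M : ℝ := (Finset.range (p+2-1)).sup' (Finset.nonempty_range_iff.mpr (by omega))
        (fun j => dist (x (n + j)) (x (n + j + 1))) with hM
    have hAM : A ≤ M := by
      rw [hM, hA]
      calc dist (x n) (x (n+1))
          = (fun j => dist (x (n + j)) (x (n + j + 1))) 0 := by norm_num
        _ ≤ _ := Finset.le_sup' (fun j => dist (x (n + j)) (x (n + j + 1))) (by simp : (0:ℕ) ∈ Finset.range (p+2-1))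
    have hM0 : 0 ≤ M := le_trans hA0 hAM
    -- finish
    have egoal : n + (p+2) - 1 = n+1+p := by omega
    have egoal2 : n + (p+2) = n+1+p+1 := by omega
    rw [egoal, egoal2]
    show R ≤ (K - 2) * μ / (2 - μ) * M
    rw [div_mul_eq_mul_div, le_div_iff₀ h2μ]
    clear_value A S R D M K
    clear key key2 hRHS hTy e1 e2
    have hmainM : 2*(1-μ)*R ≤ μ*M := by nlinarith [mul_le_mul_of_nonneg_left hAM hμ0]
    have hfac : (2-μ) ≤ 2*(K-2)*(1-μ) := by
      nlinarith [mul_nonneg (by linarith : (0:ℝ) ≤ 2*K-5) (by linarith : (0:ℝ) ≤ 2 - μ*K)]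
    have f1 : (K-2) * (2*(1-μ)*R) ≤ (K-2) * (μ*M) :=
      mul_le_mul_of_nonneg_left hmainM (by linarith)
    have f2 : R * (2-μ) ≤ R * (2*(K-2)*(1-μ)) :=
      mul_le_mul_of_nonneg_left hfac hR0
    nlinarith [f1, f2]
end

section
/- Consider X = {x₁,...,x₇} with d(xᵢ,xⱼ) = 1 for 1 ≤ i,j ≤ 6, i ≠ j, and d(xᵢ,x₇) = 2 for 1 ≤ i ≤ 6, and T defined by Tx₁ = x₁, Tx₂ = x₃, Tx₃ = x₂, Tx₄ = x₅, Tx₅ = x₆, Tx₆ = x₄, Tx₇ = x₁. Then T is a perimetric contraction on 7-polygons but not a perimetric contraction on 3-polygons (triangles). -/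
theorem stmt18 {X : Type*} [MetricSpace X] (x : Fin 7 → X)
    (hinj : Function.Injective x) (hsurj : ∀ y : X, ∃ i, y = x i)
    (hd1 : ∀ i j : Fin 7, i ≠ j → i ≠ 6 → j ≠ 6 → dist (x i) (x j) = 1)
    (hd2 : ∀ i : Fin 7, i ≠ 6 → dist (x i) (x 6) = 2)
    (T : X → X)
    (hT0 : T (x 0) = x 0) (hT1 : T (x 1) = x 2) (hT2 : T (x 2) = x 1)
    (hT3 : T (x 3) = x 4) (hT4 : T (x 4) = x 5) (hT5 : T (x 5) = x 3)
    (hT6 : T (x 6) = x 0) :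
    (∃ lam : ℝ, 0 ≤ lam ∧ lam < 1 ∧ ∀ y : Fin 7 → X, Function.Injective y →
      perim (T ∘ y) ≤ lam * perim y) ∧
    ¬(∃ lam : ℝ, 0 ≤ lam ∧ lam < 1 ∧ ∀ y : Fin 3 → X, Function.Injective y →
      perim (T ∘ y) ≤ lam * perim y) := by
  -- basic distance facts
  have hdist2 : ∀ a : Fin 7, a ≠ 6 → dist (x 6) (x a) = 2 := by
    intro a ha; rw [dist_comm]; exact hd2 a ha
  have hge1 : ∀ a b : Fin 7, a ≠ b → (1:ℝ) ≤ dist (x a) (x b) := by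
    intro a b hab
    by_cases hb : b = 6
    · subst hb; rw [hd2 a hab]; norm_num
    · by_cases ha : a = 6
      · subst ha; rw [hdist2 b (fun h => hab h.symm)]; norm_num
      · rw [hd1 a b hab ha hb]
  have hle1 : ∀ a b : Fin 7, a ≠ 6 → b ≠ 6 → dist (x a) (x b) ≤ 1 := by
    intro a b ha hb
    by_cases hab : a = b
    · subst hab; simp
    · rw [hd1 a b hab ha hb]
  have hTim : ∀ u : X, ∃ p : Fin 7, p ≠ 6 ∧ T u = x p := by
    intro u
    obtain ⟨a, rfl⟩ := hsurj u
    fin_cases a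
    · exact ⟨0, by decide, hT0⟩
    · exact ⟨2, by decide, hT1⟩
    · exact ⟨1, by decide, hT2⟩
    · exact ⟨4, by decide, hT3⟩
    · exact ⟨5, by decide, hT4⟩
    · exact ⟨3, by decide, hT5⟩
    · exact ⟨0, by decide, hT6⟩
  have hTdist : ∀ u v : X, dist (T u) (T v) ≤ 1 := by
    intro u v
    obtain ⟨p, hp, hpe⟩ := hTim u
    obtain ⟨q, hq, hqe⟩ := hTim v
    rw [hpe, hqe]; exact hle1 p q hp hq
  -- X is finite with x bijective
  have hxbij : Function.Bijective x := ⟨hinj, fun u => (hsurj u).imp fun i h => h.symm⟩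
  have : Fintype X := Fintype.ofBijective x hxbij
  constructor
  · refine ⟨7/9, by norm_num, by norm_num, ?_⟩
    intro y hy
    -- perim (T ∘ y) ≤ 7
    have hub : perim (T ∘ y) ≤ 7 := by
      unfold perim
      calc ∑ i : Fin 7, dist ((T ∘ y) i) ((T ∘ y) (i+1))
          ≤ ∑ i : Fin 7, (1:ℝ) := Finset.sum_le_sum fun i _ => hTdist _ _
        _ = 7 := by simp
    -- perim y ≥ 9
    have hysurj : Function.Surjective y := (Finite.injective_iff_surjective_of_equiv (Equiv.ofBijective x hxbij)).1 hy
    obtain ⟨j, hj⟩ := hysurj (x 6)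
    have hlb : (9:ℝ) ≤ perim y := by
      have key : ∀ i : Fin 7, (if i = j ∨ i = j - 1 then (2:ℝ) else 1)
          ≤ dist (y i) (y (i+1)) := by
        intro i
        have hidx : ∀ a b : Fin 7, a ≠ b → (∃ p q : Fin 7, p ≠ q ∧ y a = x p ∧ y b = x q) := by
          intro a b hab
          obtain ⟨p, hp⟩ := hxbij.2 (y a)
          obtain ⟨q, hq⟩ := hxbij.2 (y b)
          exact ⟨p, q, fun h => hab (hy (by rw [← hp, ← hq, h])), hp.symm, hq.symm⟩
        by_cases hcase : i = j ∨ i = j - 1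
        · rw [if_pos hcase]
          rcases hcase with h | h
          · subst h
            have hne : i + 1 ≠ i := by fin_cases i <;> decide
            obtain ⟨q, hq⟩ := hxbij.2 (y (i+1))
            have hq6 : q ≠ 6 := by
              intro h; subst h
              exact hne (hy (by rw [← hq, hj]))
            rw [hj, ← hq, hdist2 q hq6]
          · subst h
            have hsucc : j - 1 + 1 = j := by fin_cases j <;> decide
            rw [hsucc, hj]
            have hne : j - 1 ≠ j := by fin_cases j <;> decide
            obtain ⟨p, hp⟩ := hxbij.2 (y (j-1))
            have hp6 : p ≠ 6 := by
              intro h; subst h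
              exact hne (hy (by rw [← hp, hj]))
            rw [← hp, hd2 p hp6]
        · rw [if_neg hcase]
          have hne : i ≠ i + 1 := by fin_cases i <;> decide
          obtain ⟨p, q, hpq, hp, hq⟩ := hidx i (i+1) hne
          rw [hp, hq]; exact hge1 p q hpq
      have hsum : ∑ i : Fin 7, (if i = j ∨ i = j - 1 then (2:ℝ) else 1) = 9 := by
        fin_cases j <;> simp (config := { decide := true }) only [Fin.sum_univ_seven] <;> norm_num
      calc (9:ℝ) = ∑ i : Fin 7, (if i = j ∨ i = j - 1 then (2:ℝ) else 1) := hsum.symm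
        _ ≤ ∑ i : Fin 7, dist (y i) (y (i+1)) := Finset.sum_le_sum fun i _ => key i
        _ = perim y := rfl
    calc perim (T ∘ y) ≤ 7 := hub
      _ = 7/9 * 9 := by norm_num
      _ ≤ 7/9 * perim y := by nlinarith
  · rintro ⟨lam, h0, h1, h⟩
    set y : Fin 3 → X := ![x 1, x 2, x 3] with hydef
    have hyinj : Function.Injective y := by
      intro a b hab
      fin_cases a <;> fin_cases b <;> simp [hydef] at hab ⊢ <;>
        exact absurd (hinj hab) (by decide)
    have hp1 : perim y = 3 := by
      unfold perim
      rw [Fin.sum_univ_three]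
      have e0 : (0:Fin 3) + 1 = 1 := rfl
      have e1 : (1:Fin 3) + 1 = 2 := rfl
      have e2 : (2:Fin 3) + 1 = 0 := rfl
      rw [e0, e1, e2]
      show dist (x 1) (x 2) + dist (x 2) (x 3) + dist (x 3) (x 1) = 3
      rw [hd1 1 2 (by decide) (by decide) (by decide),
        hd1 2 3 (by decide) (by decide) (by decide),
        hd1 3 1 (by decide) (by decide) (by decide)]
      norm_num
    have hp2 : perim (T ∘ y) = 3 := by
      unfold perim
      rw [Fin.sum_univ_three]
      have e0 : (0:Fin 3) + 1 = 1 := rfl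
      have e1 : (1:Fin 3) + 1 = 2 := rfl
      have e2 : (2:Fin 3) + 1 = 0 := rfl
      rw [e0, e1, e2]
      show dist (T (x 1)) (T (x 2)) + dist (T (x 2)) (T (x 3)) + dist (T (x 3)) (T (x 1)) = 3
      rw [hT1, hT2, hT3]
      rw [hd1 2 1 (by decide) (by decide) (by decide),
        hd1 1 4 (by decide) (by decide) (by decide),
        hd1 4 2 (by decide) (by decide) (by decide)]
      norm_num
    have := h y hyinj
    rw [hp1, hp2] at this
    linarith
end
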